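/- arXiv:0710.1774 — 10 statements merged into one kernel-verified Lean document; each statement's English description precedes it below -/
import Mathlib

section
/- For the nonlinearity f(t,x) = 2π·cos(2πt)·cosh²(x), there exist no ν ∈ ℝ and no continuously differentiable 1-periodic u : ℝ → ℝ such that u'(t) + 2π·cos(2πt)·cosh²(u(t)) = ν for all t. (Hence the tameness hypothesis in Theorem 1.2 cannot be discarded.) -/
/-!
With `w = tanh ∘ u` the equation becomes `w' + 2π cos(2πt) = ν / cosh² u`, so
`g t = tanh (u t) + sin (2πt)` has derivative `ν / cosh² (u t)`.
Since `g` is 1-periodic, Rolle's theorem forces `ν = 0`, so `g` is constant. This is impossible: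
`tanh` takes values in `(-1, 1)`, so `g (1/4) > 0 > g (-1/4)`.
-/

/-- A function is 1-periodic if `u (t+1) = u t` for all `t`. -/
def Periodic1 (u : ℝ → ℝ) : Prop := ∀ t, u (t + 1) = u t

open Real

theorem Real.hasDerivAt_tanh (x : ℝ) : HasDerivAt tanh (1 / cosh x ^ 2) x := by
  have hcosh : cosh x ≠ 0 := (cosh_pos x).ne'
  have hquot := (hasDerivAt_sinh x).div (hasDerivAt_cosh x) hcosh
  rw [show tanh = fun y => sinh y / cosh y from funext tanh_eq_sinh_div_cosh]
  refine hquot.congr_deriv ?_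
  rw [← cosh_sq_sub_sinh_sq x]
  ring

theorem hasDerivAt_tanh_comp_add_sin {u : ℝ → ℝ} {ν t : ℝ} (hu : DifferentiableAt ℝ u t)
    (hν : deriv u t + 2 * π * cos (2 * π * t) * cosh (u t) ^ 2 = ν) :
    HasDerivAt (fun s => tanh (u s) + sin (2 * π * s)) (ν / cosh (u t) ^ 2) t := by
  have htanh := (hasDerivAt_tanh (u t)).comp t hu.hasDerivAt
  have hsin := ((hasDerivAt_id t).const_mul (2 * π)).sin
  refine (htanh.add hsin).congr_deriv ?_
  rw [← hν]
  field_simp [(cosh_pos (u t)).ne']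
  simp

theorem not_forall_tanh_comp_add_sin_eq (u : ℝ → ℝ) (c : ℝ) :
    ¬ ∀ t, tanh (u t) + sin (2 * π * t) = c := by
  intro hc
  have hquarter := hc (1 / 4)
  have hneg_quarter := hc (-(1 / 4))
  rw [show 2 * π * (1 / 4) = π / 2 by ring, sin_pi_div_two] at hquarter
  rw [show 2 * π * (-(1 / 4)) = -(π / 2) by ring, sin_neg, sin_pi_div_two] at hneg_quarter
  linarith [neg_one_lt_tanh (u (1 / 4)), tanh_lt_one (u (-(1 / 4)))]

/-- For the (non-tame) nonlinearity `f(t,x) = 2π cos(2πt) cosh²(x)` there is no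
`ν ∈ ℝ` and no `C¹` 1-periodic `u` with `u'(t) + f(t,u(t)) = ν` for all `t`:
the tameness hypothesis in Theorem 1.2 cannot be discarded. -/
theorem stmt2 :
    ¬ ∃ (ν : ℝ) (u : ℝ → ℝ), ContDiff ℝ 1 u ∧ Periodic1 u ∧
      ∀ t, deriv u t + 2 * Real.pi * Real.cos (2 * Real.pi * t) *
        (Real.cosh (u t))^2 = ν := by
  rintro ⟨ν, u, hu, hper, hν⟩
  set g : ℝ → ℝ := fun s => tanh (u s) + sin (2 * π * s)
  have hg : ∀ t, HasDerivAt g (ν / cosh (u t) ^ 2) t := fun t =>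
    hasDerivAt_tanh_comp_add_sin ((hu.differentiable one_ne_zero) t) (hν t)
  have hg_periodic : g 0 = g 1 := by
    have hu_periodic : u 1 = u 0 := by simpa using hper 0
    simp [g, hu_periodic]
  have hg_continuous : Continuous g := continuous_iff_continuousAt.2 fun t => (hg t).continuousAt
  obtain ⟨c, -, hc⟩ :=
    exists_hasDerivAt_eq_zero zero_lt_one hg_continuous.continuousOn hg_periodic fun t _ => hg t
  have hν_zero : ν = 0 := by simpa [(cosh_pos (u c)).ne'] using hc
  refine not_forall_tanh_comp_add_sin_eq u (g 0) fun t => ?_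
  refine is_const_of_deriv_eq_zero (fun t => (hg t).differentiableAt) (fun t => ?_) t 0
  rw [(hg t).deriv, hν_zero, zero_div]
end

section
/- Let f : ℝ × ℝ → ℝ be a tame nonlinearity and let ṽ : ℝ → ℝ be continuous, 1-periodic, with ∫₀¹ ṽ = 0. For each a ∈ ℝ let u_a be the unique continuously differentiable 1-periodic function with ∫₀¹ u_a = a for which there exists ν_a ∈ ℝ with u_a'(t) + f(t,u_a(t)) = ṽ(t) + ν_a for all t. Then: (i) min_{t∈[0,1]} u_a(t) → +∞ as a → +∞; (ii) max_{t∈[0,1]} u_a(t) → −∞ as a → −∞; (iii) for every t₀ ∈ ℝ, the map a ↦ u_a(t₀) is a strictly increasing bijection from ℝ onto ℝ. -/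
open MeasureTheory Filter

/-- A nonlinearity is a smooth function `f : ℝ × ℝ → ℝ` which is 1-periodic
in the first variable. -/
def Nonlinearity (f : ℝ → ℝ → ℝ) : Prop :=
  ContDiff ℝ (⊤ : ℕ∞) (Function.uncurry f) ∧ ∀ t x, f (t + 1) x = f t x

/-- `f` is wild on the interval `I`. -/
def WildOn (f : ℝ → ℝ → ℝ) (I : Set ℝ) : Prop :=
  MeasureTheory.IntegrableOn
    (fun s => 1 / max 1 (sSup ((fun t => f t s) '' Set.Icc (0:ℝ) 1))) I ∧
  MeasureTheory.IntegrableOn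
    (fun s => 1 / max 1 (sSup ((fun t => - f t s) '' Set.Icc (0:ℝ) 1))) I

/-- `f` is tame if it is wild at neither `+∞` nor `−∞`. -/
def Tame (f : ℝ → ℝ → ℝ) : Prop :=
  ¬ WildOn f (Set.Ici 0) ∧ ¬ WildOn f (Set.Iic 0)

/-!
Two solutions with means `a < b` never touch: where `w = u_b - u_a` vanishes, `w' = ν_b - ν_a`,
and this constant is either `0`, so that `w ≡ 0` by uniqueness for the ODE, or nonzero, so that
`w` crosses zero in one direction only, which a periodic function cannot do. At a minimum point
of `w` the Lipschitz bound on `f` controls `ν_b - ν_a`, and Grönwall's inequality then bounds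
`u_b - u_a` by a multiple of `b - a`, giving continuity of `a ↦ u_a(t₀)`.

If `min u_a` stayed below `C` as `a → ∞`, evaluating the equation at a minimum point would bound
`ν_a`, hence `u_a' ≤ K max(1, sup_t (-f)(t, u_a))` and `-u_a' ≤ K max(1, sup_t f(t, u_a))`.
Within one period `u_a` rises from its minimum `≤ C` to its maximum `≥ a` and falls back, so the
substitution `s = u_a(t)` bounds both wildness integrals over `[C, a]` by `K` uniformly in `a`:
`f` would be wild at `+∞`. The reflection `x ↦ -x` handles `-∞`, and bijectivity of
`a ↦ u_a(t₀)` follows by the intermediate value theorem.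
-/

open Set Function

namespace Function.Periodic

variable {u : ℝ → ℝ}

theorem sInf_image_Icc_le (hp : Periodic u 1) (hc : Continuous u) (t : ℝ) :
    sInf (u '' Icc 0 1) ≤ u t := by
  obtain ⟨s, hs, hst⟩ := hp.exists_mem_Ico₀ one_pos t
  rw [hst]
  exact csInf_le (isCompact_Icc.image hc).bddBelow (mem_image_of_mem u (Ico_subset_Icc_self hs))

theorem le_sSup_image_Icc (hp : Periodic u 1) (hc : Continuous u) (t : ℝ) :
    u t ≤ sSup (u '' Icc 0 1) := by
  obtain ⟨s, hs, hst⟩ := hp.exists_mem_Ico₀ one_pos t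
  rw [hst]
  exact le_csSup (isCompact_Icc.image hc).bddAbove (mem_image_of_mem u (Ico_subset_Icc_self hs))

end Function.Periodic

theorem exists_eq_sInf_image_Icc {u : ℝ → ℝ} (hc : Continuous u) :
    ∃ τ ∈ Icc (0:ℝ) 1, u τ = sInf (u '' Icc 0 1) := by
  obtain ⟨τ, hτ, h⟩ :=
    isCompact_Icc.exists_sInf_image_eq (nonempty_Icc.2 zero_le_one) hc.continuousOn
  exact ⟨τ, hτ, h.symm⟩

theorem exists_eq_sSup_image_Icc {u : ℝ → ℝ} (hc : Continuous u) :
    ∃ τ ∈ Icc (0:ℝ) 1, u τ = sSup (u '' Icc 0 1) := by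
  obtain ⟨τ, hτ, h⟩ :=
    isCompact_Icc.exists_sSup_image_eq (nonempty_Icc.2 zero_le_one) hc.continuousOn
  exact ⟨τ, hτ, h.symm⟩

theorem sInf_image_Icc_le_integral {u : ℝ → ℝ} (hc : Continuous u) :
    sInf (u '' Icc 0 1) ≤ ∫ t in (0:ℝ)..1, u t :=
  calc sInf (u '' Icc 0 1) = ∫ _ in (0:ℝ)..1, sInf (u '' Icc 0 1) := by simp
    _ ≤ ∫ t in (0:ℝ)..1, u t :=
      intervalIntegral.integral_mono_on zero_le_one (by simp) (hc.intervalIntegrable 0 1)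
        fun t ht => csInf_le (isCompact_Icc.image hc).bddBelow (mem_image_of_mem u ht)

theorem integral_le_sSup_image_Icc {u : ℝ → ℝ} (hc : Continuous u) :
    ∫ t in (0:ℝ)..1, u t ≤ sSup (u '' Icc 0 1) :=
  calc ∫ t in (0:ℝ)..1, u t ≤ ∫ _ in (0:ℝ)..1, sSup (u '' Icc 0 1) :=
      intervalIntegral.integral_mono_on zero_le_one (hc.intervalIntegrable 0 1) (by simp)
        fun t ht => le_csSup (isCompact_Icc.image hc).bddAbove (mem_image_of_mem u ht)
    _ = sSup (u '' Icc 0 1) := by simp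

theorem exists_lipschitzOnWith_of_periodic {f : ℝ → ℝ → ℝ} (hf : ContDiff ℝ 1 (uncurry f))
    (hp : Periodic f 1) (A B : ℝ) : ∃ K, ∀ t, LipschitzOnWith K (f t) (Icc A B) := by
  obtain ⟨K, hK⟩ := hf.locallyLipschitz.locallyLipschitzOn.exists_lipschitzOnWith_of_compact
    (isCompact_Icc.prod (isCompact_Icc (a := A) (b := B)) (s := Icc (0:ℝ) 1))
  refine ⟨K, fun t => ?_⟩
  obtain ⟨s, hs, hst⟩ := hp.exists_mem_Ico₀ one_pos t
  rw [hst, ← mul_one K]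
  exact hK.comp (LipschitzWith.prodMk_left s).lipschitzOnWith
    (fun x hx => ⟨Ico_subset_Icc_self hs, hx⟩)

theorem nonneg_of_deriv_pos_of_eq_zero {w : ℝ → ℝ} (hw : Differentiable ℝ w)
    (hz : ∀ t, w t = 0 → 0 < deriv w t) {a t : ℝ} (ha : 0 ≤ w a) (ht : a ≤ t) : 0 ≤ w t := by
  have := image_le_of_deriv_right_lt_deriv_boundary' (f := fun t => -w t) (B := fun _ => 0)
    (B' := fun _ => 0) hw.continuous.neg.continuousOn
    (fun x _ => (hw x).hasDerivAt.neg.hasDerivWithinAt) (by simpa using ha) continuousOn_const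
    (fun x _ => hasDerivWithinAt_const _ _ _)
    (fun x _ hx => neg_neg_iff_pos.2 (hz x (neg_eq_zero.1 hx))) ⟨ht, le_rfl⟩
  simpa using this

namespace Function.Periodic

variable {w : ℝ → ℝ}

theorem ne_zero_of_deriv_pos_of_eq_zero (hp : Periodic w 1) (hw : Differentiable ℝ w)
    (hz : ∀ t, w t = 0 → 0 < deriv w t) (t : ℝ) : w t ≠ 0 := by
  intro ht
  have hmin : ∀ s, w t ≤ w s := fun s => by
    obtain ⟨s', hs', hss'⟩ := hp.exists_mem_Ico one_pos s t
    rw [ht, hss']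
    exact nonneg_of_deriv_pos_of_eq_zero hw hz ht.ge hs'.1
  exact (hz t ht).ne' (IsLocalMin.deriv_eq_zero (Eventually.of_forall hmin))

theorem ne_zero_of_deriv_eq_of_eq_zero (hp : Periodic w 1) (hw : Differentiable ℝ w) {c : ℝ}
    (hc : c ≠ 0) (hz : ∀ t, w t = 0 → deriv w t = c) (t : ℝ) : w t ≠ 0 := by
  rcases hc.lt_or_gt with hc | hc
  · have hp' : Periodic (fun t => -w t) 1 := fun t => by simp [hp t]
    refine neg_ne_zero.1 (hp'.ne_zero_of_deriv_pos_of_eq_zero hw.neg (fun s hs => ?_) t)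
    rw [deriv.fun_neg, hz s (neg_eq_zero.1 hs)]
    exact neg_pos.2 hc
  · exact hp.ne_zero_of_deriv_pos_of_eq_zero hw (fun s hs => hz s hs ▸ hc) t

end Function.Periodic

structure IsPeriodicSolution (f : ℝ → ℝ → ℝ) (v : ℝ → ℝ) (ν : ℝ) (u : ℝ → ℝ) : Prop where
  contDiff : ContDiff ℝ 1 u
  periodic : Periodic u 1
  deriv_add : ∀ t, deriv u t + f t (u t) = v t + ν

namespace IsPeriodicSolution

variable {f : ℝ → ℝ → ℝ} {v u u₁ u₂ : ℝ → ℝ} {ν ν₁ ν₂ : ℝ}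

theorem differentiable (h : IsPeriodicSolution f v ν u) : Differentiable ℝ u :=
  h.contDiff.differentiable one_ne_zero

theorem hasDerivAt (h : IsPeriodicSolution f v ν u) (t : ℝ) :
    HasDerivAt u (v t + ν - f t (u t)) t := by
  rw [← h.deriv_add t, add_sub_cancel_right]
  exact (h.differentiable t).hasDerivAt

theorem mem_Icc (h : IsPeriodicSolution f v ν u) (t : ℝ) :
    u t ∈ Icc (sInf (u '' Icc 0 1)) (sSup (u '' Icc 0 1)) :=
  ⟨h.periodic.sInf_image_Icc_le h.contDiff.continuous t,
    h.periodic.le_sSup_image_Icc h.contDiff.continuous t⟩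

theorem eq_of_apply_eq (hf : ContDiff ℝ 1 (uncurry f)) (hfp : Periodic f 1)
    (h₁ : IsPeriodicSolution f v ν u₁) (h₂ : IsPeriodicSolution f v ν u₂) {t₀ : ℝ}
    (heq : u₁ t₀ = u₂ t₀) : u₁ = u₂ := by
  set A := min (sInf (u₁ '' Icc 0 1)) (sInf (u₂ '' Icc 0 1))
  set B := max (sSup (u₁ '' Icc 0 1)) (sSup (u₂ '' Icc 0 1))
  obtain ⟨K, hK⟩ := exists_lipschitzOnWith_of_periodic hf hfp A B
  have hmem₁ t : u₁ t ∈ Icc A B :=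
    ⟨min_le_of_left_le (h₁.mem_Icc t).1, le_max_of_le_left (h₁.mem_Icc t).2⟩
  have hmem₂ t : u₂ t ∈ Icc A B :=
    ⟨min_le_of_right_le (h₂.mem_Icc t).1, le_max_of_le_right (h₂.mem_Icc t).2⟩
  refine ODE_solution_unique_univ (v := fun t x => v t + ν - f t x) (s := fun _ => Icc A B)
    (K := K) (fun t => LipschitzOnWith.of_dist_le_mul fun x hx y hy => ?_)
    (fun t => ⟨h₁.hasDerivAt t, hmem₁ t⟩) (fun t => ⟨h₂.hasDerivAt t, hmem₂ t⟩) heq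
  rw [dist_sub_left]
  exact (hK t).dist_le_mul x hx y hy

theorem lt_of_integral_lt (hf : ContDiff ℝ 1 (uncurry f)) (hfp : Periodic f 1)
    (h₁ : IsPeriodicSolution f v ν₁ u₁) (h₂ : IsPeriodicSolution f v ν₂ u₂)
    (hlt : ∫ t in (0:ℝ)..1, u₁ t < ∫ t in (0:ℝ)..1, u₂ t) (t : ℝ) : u₁ t < u₂ t := by
  set w := fun t => u₂ t - u₁ t
  have hwc : Continuous w := h₂.contDiff.continuous.sub h₁.contDiff.continuous
  have hwp : Periodic w 1 := fun s => by simp [w, h₁.periodic s, h₂.periodic s]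
  have hderiv s (hs : w s = 0) : deriv w s = ν₂ - ν₁ := by
    have hw : HasDerivAt w _ s := (h₂.hasDerivAt s).sub (h₁.hasDerivAt s)
    rw [hw.deriv, sub_eq_zero.1 hs]
    ring
  have hne : ∀ s, w s ≠ 0 := by
    rcases eq_or_ne ν₁ ν₂ with rfl | hν
    · intro s hs
      have := h₁.eq_of_apply_eq hf hfp h₂ (sub_eq_zero.1 hs).symm
      exact hlt.ne (by rw [this])
    · exact hwp.ne_zero_of_deriv_eq_of_eq_zero (h₂.differentiable.sub h₁.differentiable)
        (sub_ne_zero.2 hν.symm) hderiv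
  obtain ⟨q, hq⟩ : ∃ q, 0 < w q := by
    by_contra! hle
    have hint : ∫ t in (0:ℝ)..1, w t ≤ 0 :=
      (integral_le_sSup_image_Icc hwc).trans
        (csSup_le ((nonempty_Icc.2 zero_le_one).image w) (by rintro _ ⟨s, -, rfl⟩; exact hle s))
    rw [intervalIntegral.integral_sub (h₂.contDiff.continuous.intervalIntegrable 0 1)
      (h₁.contDiff.continuous.intervalIntegrable 0 1)] at hint
    linarith
  by_contra! hle
  obtain ⟨s, -, hs⟩ := intermediate_value_uIcc (a := t) (b := q) hwc.continuousOn
    (mem_uIcc.2 (Or.inl ⟨sub_nonpos.2 hle, hq.le⟩))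
  exact hne s hs

end IsPeriodicSolution

theorem Function.Periodic.le_two_mul_mul_exp {w : ℝ → ℝ} {K δ σ : ℝ} (hp : Periodic w 1)
    (hw : Differentiable ℝ w) (hK : 0 ≤ K) (hw0 : ∀ t, 0 ≤ w t)
    (hderiv : ∀ t, |deriv w t| ≤ K * (w t + δ)) (hσ : w σ ≤ δ) (t : ℝ) :
    w t ≤ 2 * δ * Real.exp K := by
  obtain ⟨s, hs, hts⟩ := hp.exists_mem_Ico one_pos t σ
  have hδ : 0 ≤ δ := (hw0 σ).trans hσ
  have hpos x : 0 ≤ w x + δ := add_nonneg (hw0 x) hδ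
  have hgron := norm_le_gronwallBound_of_norm_deriv_right_le (f := fun x => w x + δ)
    (f' := deriv w) (δ := 2 * δ) (ε := 0) (hw.continuous.add continuous_const).continuousOn
    (fun x _ => ((hw x).hasDerivAt.add_const δ).hasDerivWithinAt)
    (by rw [Real.norm_of_nonneg (hpos σ)]; linarith)
    (fun x _ => by rw [Real.norm_eq_abs, Real.norm_of_nonneg (hpos x), add_zero]; exact hderiv x)
    s ⟨hs.1, le_rfl⟩
  rw [gronwallBound_ε0, Real.norm_of_nonneg (hpos s)] at hgron
  have hexp : Real.exp (K * (s - σ)) ≤ Real.exp K :=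
    Real.exp_le_exp.2 (mul_le_of_le_one_right hK (by linarith [hs.2]))
  rw [hts]
  nlinarith

namespace IsPeriodicSolution

variable {f : ℝ → ℝ → ℝ} {v u₁ u₂ : ℝ → ℝ} {ν₁ ν₂ : ℝ}

theorem sub_le_two_mul_mul_exp {A B : ℝ} {K : NNReal}
    (hK : ∀ t, LipschitzOnWith K (f t) (Icc A B))
    (h₁ : IsPeriodicSolution f v ν₁ u₁) (h₂ : IsPeriodicSolution f v ν₂ u₂)
    (hmem₁ : ∀ t, u₁ t ∈ Icc A B) (hmem₂ : ∀ t, u₂ t ∈ Icc A B) (hle : ∀ t, u₁ t ≤ u₂ t)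
    (t : ℝ) :
    u₂ t - u₁ t ≤ 2 * ((∫ t in (0:ℝ)..1, u₂ t) - ∫ t in (0:ℝ)..1, u₁ t) * Real.exp K := by
  set w := fun t => u₂ t - u₁ t
  have hwc : Continuous w := h₂.contDiff.continuous.sub h₁.contDiff.continuous
  have hwp : Periodic w 1 := fun s => by simp [w, h₁.periodic s, h₂.periodic s]
  have hw : ∀ s, HasDerivAt w (ν₂ - ν₁ - (f s (u₂ s) - f s (u₁ s))) s := fun s =>
    ((h₂.hasDerivAt s).sub (h₁.hasDerivAt s)).congr_deriv (by ring)
  have hlip s : |f s (u₂ s) - f s (u₁ s)| ≤ K * w s := by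
    have hw_eq : w s = dist (u₂ s) (u₁ s) := (abs_of_nonneg (sub_nonneg.2 (hle s))).symm
    rw [← Real.dist_eq, hw_eq]
    exact (hK s).dist_le_mul _ (hmem₂ s) _ (hmem₁ s)
  obtain ⟨σ, -, hσ⟩ := exists_eq_sInf_image_Icc hwc
  have hσmin : IsLocalMin w σ :=
    Eventually.of_forall fun s => hσ ▸ hwp.sInf_image_Icc_le hwc s
  have hν : |ν₂ - ν₁| ≤ K * w σ := by
    have h0 := (hw σ).deriv ▸ hσmin.deriv_eq_zero
    rw [sub_eq_zero.1 h0]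
    exact hlip σ
  have hint : w σ ≤ (∫ t in (0:ℝ)..1, u₂ t) - ∫ t in (0:ℝ)..1, u₁ t := by
    rw [hσ, ← intervalIntegral.integral_sub (h₂.contDiff.continuous.intervalIntegrable 0 1)
      (h₁.contDiff.continuous.intervalIntegrable 0 1)]
    exact sInf_image_Icc_le_integral hwc
  refine hwp.le_two_mul_mul_exp (fun s => (hw s).differentiableAt) K.coe_nonneg
    (fun s => sub_nonneg.2 (hle s)) (fun s => ?_) hint t
  rw [(hw s).deriv]
  calc |ν₂ - ν₁ - (f s (u₂ s) - f s (u₁ s))|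
      ≤ |ν₂ - ν₁| + |f s (u₂ s) - f s (u₁ s)| := abs_sub _ _
    _ ≤ K * w σ + K * w s := add_le_add hν (hlip s)
    _ ≤ _ := by nlinarith [mul_le_mul_of_nonneg_left hint K.coe_nonneg]

end IsPeriodicSolution

-- Substituting `s = u t` turns `∫ (g s)⁻¹ ds` into `∫ u'(t) / g (u t) dt ≤ ∫ K dt`.
theorem integral_inv_le_of_deriv_le {u g : ℝ → ℝ} {K τ₁ τ₂ : ℝ} (hu : ContDiff ℝ 1 u)
    (hg : Continuous g) (hpos : ∀ s, 0 < g s) (hle : ∀ t, deriv u t ≤ K * g (u t))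
    (hτ : τ₁ ≤ τ₂) : ∫ s in u τ₁..u τ₂, (g s)⁻¹ ≤ K * (τ₂ - τ₁) := by
  have hu' := hu.continuous_deriv le_rfl
  rw [← intervalIntegral.integral_comp_mul_deriv
    (fun t _ => (hu.differentiable one_ne_zero t).hasDerivAt) hu'.continuousOn
    (g := fun s => (g s)⁻¹) (hg.inv₀ fun s => (hpos s).ne')]
  calc ∫ t in τ₁..τ₂, ((fun s => (g s)⁻¹) ∘ u) t * deriv u t
      ≤ ∫ _ in τ₁..τ₂, K :=
        intervalIntegral.integral_mono_on hτ
          (((hg.comp hu.continuous).inv₀ fun t => (hpos _).ne').mul hu' |>.intervalIntegrable _ _)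
          (by simp) fun t _ => by
            rw [comp_apply, inv_mul_le_iff₀ (hpos _), mul_comm]
            exact hle t
    _ = K * (τ₂ - τ₁) := by simp [mul_comm]

namespace Function.Periodic

variable {u g : ℝ → ℝ} {K : ℝ}

theorem integral_inv_le_of_deriv_le (hp : Periodic u 1) (hu : ContDiff ℝ 1 u)
    (hg : Continuous g) (hpos : ∀ s, 0 < g s) (hK : 0 ≤ K) (hle : ∀ t, deriv u t ≤ K * g (u t))
    (τ₁ τ₂ : ℝ) : ∫ s in u τ₁..u τ₂, (g s)⁻¹ ≤ K := by
  obtain ⟨τ, hτ, hτ₂⟩ := hp.exists_mem_Ico one_pos τ₂ τ₁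
  rw [hτ₂]
  exact (_root_.integral_inv_le_of_deriv_le hu hg hpos hle hτ.1).trans
    (mul_le_of_le_one_right hK (by linarith [hτ.2]))

theorem integral_inv_le_of_neg_le_deriv (hp : Periodic u 1) (hu : ContDiff ℝ 1 u)
    (hg : Continuous g) (hpos : ∀ s, 0 < g s) (hK : 0 ≤ K)
    (hle : ∀ t, -(K * g (u t)) ≤ deriv u t) (τ₁ τ₂ : ℝ) :
    ∫ s in u τ₁..u τ₂, (g s)⁻¹ ≤ K := by
  have hrev : Periodic (fun t => u (-t)) 1 := fun t => by
    show u (-(t + 1)) = u (-t)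
    rw [neg_add', hp.sub_eq]
  simpa using hrev.integral_inv_le_of_deriv_le (hu.comp contDiff_neg) hg hpos hK
    (fun t => by rw [deriv_comp_neg]; linarith [hle (-t)]) (-τ₁) (-τ₂)

end Function.Periodic

noncomputable def timeSup (f : ℝ → ℝ → ℝ) (s : ℝ) : ℝ := sSup ((fun t => f t s) '' Icc 0 1)

section TimeSup

variable {f : ℝ → ℝ → ℝ}

theorem continuous_timeSup (hf : Continuous (uncurry f)) : Continuous (timeSup f) :=
  isCompact_Icc.continuous_sSup (f := fun s t => f t s) (hf.comp continuous_swap)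

theorem le_timeSup (hf : Continuous (uncurry f)) (hfp : Periodic f 1) (t s : ℝ) :
    f t s ≤ timeSup f s :=
  Periodic.le_sSup_image_Icc (u := fun t => f t s) (fun t => congrFun (hfp t) s)
    (hf.comp (continuous_id.prodMk continuous_const)) t

theorem wildOn_iff {I : Set ℝ} :
    WildOn f I ↔ IntegrableOn (fun s => (max 1 (timeSup f s))⁻¹) I ∧
      IntegrableOn (fun s => (max 1 (timeSup (fun t x => -f t x) s))⁻¹) I := by
  simp only [WildOn, timeSup, one_div]

end TimeSup

theorem IsPeriodicSolution.integral_inv_max_timeSup_le {f : ℝ → ℝ → ℝ} {v u : ℝ → ℝ} {ν C : ℝ}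
    (hf : Continuous (uncurry f)) (hfp : Periodic f 1) (h : IsPeriodicSolution f v ν u)
    (hC : ∀ t, |v t + ν| ≤ C) :
    ∫ s in sInf (u '' Icc 0 1)..sSup (u '' Icc 0 1), (max 1 (timeSup f s))⁻¹ ≤ 1 + C ∧
    ∫ s in sInf (u '' Icc 0 1)..sSup (u '' Icc 0 1),
      (max 1 (timeSup (fun t x => -f t x) s))⁻¹ ≤ 1 + C := by
  have hC0 : 0 ≤ C := (abs_nonneg _).trans (hC 0)
  have hmax (g : ℝ) : C + g ≤ (1 + C) * max 1 g := by
    nlinarith [le_max_left 1 g, le_max_right 1 g]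
  have hderiv t : deriv u t = v t + ν - f t (u t) := (h.hasDerivAt t).deriv
  have hnf : Continuous (uncurry fun t x => -f t x) := hf.neg
  have hnfp : Periodic (fun t x => -f t x) 1 := fun t => funext fun x => by simp [hfp t]
  obtain ⟨τ₁, -, h₁⟩ := exists_eq_sInf_image_Icc h.contDiff.continuous
  obtain ⟨τ₂, -, h₂⟩ := exists_eq_sSup_image_Icc h.contDiff.continuous
  rw [← h₁, ← h₂]
  constructor
  · refine h.periodic.integral_inv_le_of_neg_le_deriv h.contDiff
      (continuous_const.max (continuous_timeSup hf)) (fun s => by positivity) (by linarith)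
      (fun t => ?_) τ₁ τ₂
    rw [hderiv]
    linarith [hmax (timeSup f (u t)), le_timeSup hf hfp t (u t), (abs_le.1 (hC t)).1]
  · refine h.periodic.integral_inv_le_of_deriv_le h.contDiff
      (continuous_const.max (continuous_timeSup hnf)) (fun s => by positivity) (by linarith)
      (fun t => ?_) τ₁ τ₂
    rw [hderiv]
    linarith [hmax (timeSup (fun t x => -f t x) (u t)), le_timeSup hnf hnfp t (u t),
      (abs_le.1 (hC t)).2]

theorem IsPeriodicSolution.abs_le_of_sInf_mem {f : ℝ → ℝ → ℝ} {v u : ℝ → ℝ} {ν A B S V : ℝ}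
    (h : IsPeriodicSolution f v ν u) (hS : ∀ t ∈ Icc (0:ℝ) 1, ∀ x ∈ Icc A B, |f t x| ≤ S)
    (hV : ∀ t, |v t| ≤ V) (hmin : sInf (u '' Icc 0 1) ∈ Icc A B) : |ν| ≤ S + V := by
  obtain ⟨τ, hτ, hτu⟩ := exists_eq_sInf_image_Icc h.contDiff.continuous
  have hτmin : IsLocalMin u τ := Eventually.of_forall fun t => hτu ▸ (h.mem_Icc t).1
  have hν : ν = f τ (u τ) - v τ := by linarith [h.deriv_add τ, hτmin.deriv_eq_zero]
  rw [hν]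
  exact (abs_sub _ _).trans (add_le_add (hS τ hτ _ (hτu ▸ hmin)) (hV τ))

theorem integrableOn_Ici_of_integral_le {ι : Type*} {l : Filter ι} [l.IsCountablyGenerated]
    [l.NeBot] {g : ℝ → ℝ} {m M : ι → ℝ} {C K : ℝ} (hg : Continuous g) (hg0 : ∀ s, 0 ≤ g s)
    (hm : ∀ i, m i ≤ C) (hM : Tendsto M l atTop) (hK : ∀ᶠ i in l, ∫ s in m i..M i, g s ≤ K) :
    IntegrableOn g (Ici 0) := by
  rw [integrableOn_Ici_iff_integrableOn_Ioi]
  refine integrableOn_Ioi_of_intervalIntegral_norm_bounded ((∫ s in (0:ℝ)..max C 0, g s) + K) 0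
    (fun _ => hg.integrableOn_Ioc) hM ?_
  filter_upwards [hK, hM.eventually_ge_atTop (max C 0)] with i hi hMi
  simp only [Real.norm_of_nonneg (hg0 _)]
  rw [← intervalIntegral.integral_add_adjacent_intervals (b := max C 0)
    (hg.intervalIntegrable _ _) (hg.intervalIntegrable _ _)]
  have : ∫ s in max C 0..M i, g s ≤ ∫ s in m i..M i, g s :=
    intervalIntegral.integral_mono_interval ((hm i).trans (le_max_left _ _)) hMi le_rfl
      (Eventually.of_forall hg0) (hg.intervalIntegrable _ _)
  linarith


theorem IsPeriodicSolution.neg {f : ℝ → ℝ → ℝ} {v u : ℝ → ℝ} {ν : ℝ}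
    (h : IsPeriodicSolution f v ν u) :
    IsPeriodicSolution (fun t x => -f t (-x)) (fun t => -v t) (-ν) (fun t => -u t) where
  contDiff := h.contDiff.neg
  periodic t := by simp [h.periodic t]
  deriv_add t := by
    rw [deriv.fun_neg, neg_neg]
    linarith [h.deriv_add t]

theorem integrableOn_Iic_of_integrableOn_Ici_comp_neg {g : ℝ → ℝ}
    (h : IntegrableOn (fun s => g (-s)) (Ici 0)) : IntegrableOn g (Iic 0) := by
  have := (Measure.measurePreserving_neg (volume : Measure ℝ)).integrableOn_comp_preimage
    (Homeomorph.neg ℝ).measurableEmbedding (f := g) (s := Iic 0)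
  rw [show Neg.neg ⁻¹' Iic (0:ℝ) = Ici 0 by ext; simp] at this
  exact this.1 h

theorem not_wildOn_Ici_neg_comp_neg {f : ℝ → ℝ → ℝ} (h : ¬WildOn f (Iic 0)) :
    ¬WildOn (fun t x => -f t (-x)) (Ici 0) := by
  rw [wildOn_iff] at h ⊢
  rintro ⟨h₁, h₂⟩
  refine h ⟨integrableOn_Iic_of_integrableOn_Ici_comp_neg ?_,
    integrableOn_Iic_of_integrableOn_Ici_comp_neg (g := fun s => (max 1 (timeSup _ s))⁻¹) h₁⟩
  simpa [timeSup] using h₂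

section Family

variable {f : ℝ → ℝ → ℝ} {v : ℝ → ℝ} {u : ℝ → ℝ → ℝ} {ν : ℝ → ℝ}

theorem strictMono_apply_of_isPeriodicSolution (hf : ContDiff ℝ 1 (uncurry f))
    (hfp : Periodic f 1) (hu : ∀ a, IsPeriodicSolution f v (ν a) (u a))
    (hmean : ∀ a, ∫ t in (0:ℝ)..1, u a t = a) (t : ℝ) : StrictMono fun a => u a t :=
  fun a b hab => (hu a).lt_of_integral_lt hf hfp (hu b) (by rwa [hmean, hmean]) t

theorem continuous_apply_of_isPeriodicSolution (hf : ContDiff ℝ 1 (uncurry f))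
    (hfp : Periodic f 1) (hu : ∀ a, IsPeriodicSolution f v (ν a) (u a))
    (hmean : ∀ a, ∫ t in (0:ℝ)..1, u a t = a) (t : ℝ) : Continuous fun a => u a t := by
  have hmono s := (strictMono_apply_of_isPeriodicSolution hf hfp hu hmean s).monotone
  refine continuous_iff_continuousAt.2 fun a₀ => ?_
  set A := sInf (u (a₀ - 1) '' Icc 0 1)
  set B := sSup (u (a₀ + 1) '' Icc 0 1)
  have hmem a (ha : |a - a₀| < 1) s : u a s ∈ Icc A B := by
    obtain ⟨h₁, h₂⟩ := abs_sub_lt_iff.1 ha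
    exact ⟨((hu _).mem_Icc s).1.trans (hmono s (by linarith)),
      (hmono s (by linarith)).trans ((hu _).mem_Icc s).2⟩
  obtain ⟨K, hK⟩ := exists_lipschitzOnWith_of_periodic hf hfp A B
  have hsub a b (ha : |a - a₀| < 1) (hb : |b - a₀| < 1) (hab : a ≤ b) :
      dist (u a t) (u b t) ≤ 2 * Real.exp K * dist a b := by
    rw [Real.dist_eq, Real.dist_eq, abs_sub_comm, abs_of_nonneg (sub_nonneg.2 (hmono t hab)),
      abs_sub_comm, abs_of_nonneg (sub_nonneg.2 hab)]
    have := (hu a).sub_le_two_mul_mul_exp hK (hu b) (hmem a ha) (hmem b hb) (fun s => hmono s hab) t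
    rw [hmean, hmean] at this
    linarith
  refine continuousAt_of_locally_lipschitz one_pos (2 * Real.exp K) fun a ha => ?_
  rw [Real.dist_eq] at ha
  have h₀ : |a₀ - a₀| < 1 := by simp
  rcases le_total a a₀ with hle | hle
  · exact hsub a a₀ ha h₀ hle
  · rw [dist_comm, dist_comm a]
    exact hsub a₀ a h₀ ha hle

theorem tendsto_sInf_atTop_of_not_wildOn (hf : ContDiff ℝ 1 (uncurry f)) (hfp : Periodic f 1)
    (hwild : ¬WildOn f (Ici 0)) (hv : Continuous v) (hvp : Periodic v 1)
    (hu : ∀ a, IsPeriodicSolution f v (ν a) (u a)) (hmean : ∀ a, ∫ t in (0:ℝ)..1, u a t = a) :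
    Tendsto (fun a => sInf (u a '' Icc 0 1)) atTop atTop := by
  set m := fun a => sInf (u a '' Icc 0 1)
  have hmono : Monotone m := fun a b hab => by
    obtain ⟨τ, -, hτ⟩ := exists_eq_sInf_image_Icc (hu b).contDiff.continuous
    calc m a ≤ u a τ := ((hu a).mem_Icc τ).1
      _ ≤ u b τ := (strictMono_apply_of_isPeriodicSolution hf hfp hu hmean τ).monotone hab
      _ = m b := hτ
  refine tendsto_atTop_atTop_of_monotone hmono fun C => ?_
  by_contra! hC
  obtain ⟨V, hV⟩ := isBounded_iff_forall_norm_le.1 (hvp.isBounded_of_continuous one_ne_zero hv)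
  obtain ⟨S, hS⟩ := (isCompact_Icc.prod isCompact_Icc).exists_bound_of_continuousOn
    (s := Icc (0:ℝ) 1 ×ˢ Icc (m 0) C) hf.continuous.continuousOn
  have hν a (ha : 0 ≤ a) : |ν a| ≤ S + V :=
    (hu a).abs_le_of_sInf_mem (fun t ht x hx => hS (t, x) ⟨ht, hx⟩)
      (fun t => hV _ (mem_range_self t)) ⟨hmono ha, (hC a).le⟩
  have hK : ∀ᶠ a in atTop, ∀ t, |v t + ν a| ≤ V + (S + V) :=
    (eventually_ge_atTop 0).mono fun a ha t =>
      (abs_add_le _ _).trans (add_le_add (hV _ (mem_range_self t)) (hν a ha))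
  have hM : Tendsto (fun a => sSup (u a '' Icc 0 1)) atTop atTop :=
    tendsto_atTop_mono (fun a => (hmean a).ge.trans
      (integral_le_sSup_image_Icc (hu a).contDiff.continuous)) tendsto_id
  have hint (g : ℝ → ℝ → ℝ) (hg : Continuous (uncurry g))
      (hbound : ∀ᶠ a in atTop, ∫ s in m a..sSup (u a '' Icc 0 1), (max 1 (timeSup g s))⁻¹
        ≤ 1 + (V + (S + V))) :
      IntegrableOn (fun s => (max 1 (timeSup g s))⁻¹) (Ici 0) :=
    integrableOn_Ici_of_integral_le ((continuous_const.max (continuous_timeSup hg)).inv₀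
      fun s => by positivity) (fun s => by positivity) (fun a => (hC a).le) hM hbound
  exact hwild (wildOn_iff.2
    ⟨hint f hf.continuous (hK.mono fun a ha =>
      ((hu a).integral_inv_max_timeSup_le hf.continuous hfp ha).1),
    hint _ hf.continuous.neg (hK.mono fun a ha =>
      ((hu a).integral_inv_max_timeSup_le hf.continuous hfp ha).2)⟩)

theorem tendsto_sSup_atBot_of_not_wildOn (hf : ContDiff ℝ 1 (uncurry f)) (hfp : Periodic f 1)
    (hwild : ¬WildOn f (Iic 0)) (hv : Continuous v) (hvp : Periodic v 1)
    (hu : ∀ a, IsPeriodicSolution f v (ν a) (u a)) (hmean : ∀ a, ∫ t in (0:ℝ)..1, u a t = a) :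
    Tendsto (fun a => sSup (u a '' Icc 0 1)) atBot atBot := by
  have hrefl := tendsto_sInf_atTop_of_not_wildOn (f := fun t x => -f t (-x))
    (u := fun a t => -u (-a) t) (hf.comp (contDiff_fst.prodMk contDiff_snd.neg)).neg
    (fun t => funext fun x => by simp [hfp t]) (not_wildOn_Ici_neg_comp_neg hwild) hv.neg
    (fun t => by simp [hvp t]) (fun a => (hu (-a)).neg)
    (fun a => by simp [intervalIntegral.integral_neg, hmean])
  have himage a : sInf ((fun t => -u (-a) t) '' Icc 0 1) = -sSup (u (-a) '' Icc 0 1) := by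
    rw [← Real.sInf_neg, ← Set.image_neg_eq_neg, Set.image_image]
  simp only [himage, tendsto_neg_atTop_iff] at hrefl
  simpa [Function.comp_def] using hrefl.comp tendsto_neg_atBot_atTop

end Family

theorem stmt3_general (f : ℝ → ℝ → ℝ) (hf : Nonlinearity f) (htame : Tame f)
    (vt : ℝ → ℝ) (hvt : Continuous vt) (hvtper : Periodic1 vt)
    (u : ℝ → ℝ → ℝ) (ν : ℝ → ℝ)
    (hu : ∀ a, ContDiff ℝ 1 (u a) ∧ Periodic1 (u a) ∧
      (∫ t in (0:ℝ)..1, u a t) = a ∧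
      ∀ t, deriv (u a) t + f t (u a t) = vt t + ν a) :
    Tendsto (fun a => sInf (u a '' Set.Icc (0:ℝ) 1)) atTop atTop ∧
    Tendsto (fun a => sSup (u a '' Set.Icc (0:ℝ) 1)) atBot atBot ∧
    ∀ t₀ : ℝ, StrictMono (fun a => u a t₀) ∧
      Function.Bijective (fun a => u a t₀) := by
  obtain ⟨hsmooth, hper⟩ := hf
  have hf : ContDiff ℝ 1 (uncurry f) := hsmooth.of_le (by exact_mod_cast le_top)
  have hfp : Periodic f 1 := fun t => funext (hper t)
  have hsol a : IsPeriodicSolution f vt (ν a) (u a) := ⟨(hu a).1, (hu a).2.1, (hu a).2.2.2⟩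
  have hmean a : ∫ t in (0:ℝ)..1, u a t = a := (hu a).2.2.1
  have htop := tendsto_sInf_atTop_of_not_wildOn hf hfp htame.1 hvt hvtper hsol hmean
  have hbot := tendsto_sSup_atBot_of_not_wildOn hf hfp htame.2 hvt hvtper hsol hmean
  refine ⟨htop, hbot, fun t₀ => ?_⟩
  have hmono := strictMono_apply_of_isPeriodicSolution hf hfp hsol hmean t₀
  refine ⟨hmono, hmono.injective, ?_⟩
  exact (continuous_apply_of_isPeriodicSolution hf hfp hsol hmean t₀).surjective
    (tendsto_atTop_mono (fun a => ((hsol a).mem_Icc t₀).1) htop)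
    (tendsto_atBot_mono (fun a => ((hsol a).mem_Icc t₀).2) hbot)

/-- **Lemma 1.3** (fibres are parametrized by average and by evaluation).
If for each `a` the function `u a` is the unique `C¹` 1-periodic function of
mean `a` with `(u a)' + f(t, u a) = ṽ + ν a` for some constant `ν a`, then
`min_{[0,1]} u a → +∞` as `a → +∞`, `max_{[0,1]} u a → −∞` as `a → −∞`, and
for every `t₀` the map `a ↦ u a t₀` is a strictly increasing bijection of `ℝ`. -/
theorem stmt3 (f : ℝ → ℝ → ℝ) (hf : Nonlinearity f) (htame : Tame f)
    (vt : ℝ → ℝ) (hvt : Continuous vt) (hvtper : Periodic1 vt)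
    (hvtmean : (∫ t in (0:ℝ)..1, vt t) = 0)
    (u : ℝ → ℝ → ℝ) (ν : ℝ → ℝ)
    (hu : ∀ a, ContDiff ℝ 1 (u a) ∧ Periodic1 (u a) ∧
      (∫ t in (0:ℝ)..1, u a t) = a ∧
      ∀ t, deriv (u a) t + f t (u a t) = vt t + ν a) :
    Tendsto (fun a => sInf (u a '' Set.Icc (0:ℝ) 1)) atTop atTop ∧
    Tendsto (fun a => sSup (u a '' Set.Icc (0:ℝ) 1)) atBot atBot ∧
    ∀ t₀ : ℝ, StrictMono (fun a => u a t₀) ∧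
      Function.Bijective (fun a => u a t₀) :=
  stmt3_general f hf htame vt hvt hvtper u ν hu
end

section
/- Let f : ℝ × ℝ → ℝ be a proper nonlinearity. Then for every k > 0 there exists M > 0 such that every continuously differentiable 1-periodic u : ℝ → ℝ satisfying |u'(t) + f(t,u(t))| ≤ k for all t also satisfies |u(t)| ≤ M for all t. -/
/-!
At an extremum `a` of a periodic `u` we have `u' a = 0`, so `|f(a, u a)| ≤ k`. Properness gives
a radius `R` beyond which `|f(t, x)| > k` for all `t ∈ [0, 1]`; taking the extrema in `[0, 1]`,
both `max u` and `min u` lie in `(-R, R)`.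
-/

open Filter

/-- A nonlinearity is proper if `inf_{t ∈ [0,1]} |f(t,x)| → ∞` as `|x| → ∞`. -/
def ProperNL (f : ℝ → ℝ → ℝ) : Prop :=
  Tendsto (fun x : ℝ => sInf ((fun t => |f t x|) '' Set.Icc (0:ℝ) 1))
    (Filter.comap (fun x : ℝ => |x|) Filter.atTop) Filter.atTop

open Set

theorem ProperNL.exists_forall_le_abs {f : ℝ → ℝ → ℝ} (hf : ProperNL f) (C : ℝ) :
    ∃ R, ∀ x, R ≤ |x| → ∀ t ∈ Icc (0 : ℝ) 1, C ≤ |f t x| := by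
  obtain ⟨R, hR⟩ := eventually_atTop.mp <| eventually_comap.mp <|
    hf.eventually (eventually_ge_atTop C)
  refine ⟨R, fun x hx t ht => (hR |x| hx x rfl).trans (csInf_le ⟨0, ?_⟩ ⟨t, ht, rfl⟩)⟩
  rintro _ ⟨s, -, rfl⟩
  exact abs_nonneg _

section Periodic

variable {α : Type*} [LinearOrder α] [TopologicalSpace α] [OrderClosedTopology α]
  {u : ℝ → α} {c : ℝ}

theorem Function.Periodic.exists_mem_Icc_isMaxOn_univ (hp : u.Periodic c) (hc : 0 < c)
    (hu : Continuous u) : ∃ a ∈ Icc 0 c, IsMaxOn u univ a := by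
  obtain ⟨a, ha, hmax⟩ :=
    isCompact_Icc.exists_isMaxOn (nonempty_Icc.2 hc.le) hu.continuousOn
  refine ⟨a, ha, fun x _ => ?_⟩
  obtain ⟨y, hy, hyx⟩ : u x ∈ u '' Icc 0 (0 + c) := hp.image_Icc hc 0 ▸ mem_range_self x
  rw [zero_add] at hy
  exact (hyx ▸ hmax hy : u x ≤ u a)

theorem Function.Periodic.exists_mem_Icc_isMinOn_univ (hp : u.Periodic c) (hc : 0 < c)
    (hu : Continuous u) : ∃ a ∈ Icc 0 c, IsMinOn u univ a :=
  Function.Periodic.exists_mem_Icc_isMaxOn_univ (α := αᵒᵈ) hp hc hu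

end Periodic

theorem stmt4_general (f : ℝ → ℝ → ℝ) (hproper : ProperNL f)
    (k : ℝ) :
    ∃ M : ℝ, 0 < M ∧ ∀ u : ℝ → ℝ, ContDiff ℝ 1 u → Periodic1 u →
      (∀ t, |deriv u t + f t (u t)| ≤ k) → ∀ t, |u t| ≤ M := by
  obtain ⟨R, hR⟩ := hproper.exists_forall_le_abs (k + 1)
  refine ⟨max R 1, by positivity, fun u hu hper hbd t => ?_⟩
  have hp : u.Periodic 1 := hper
  have small_of_deriv_eq_zero : ∀ a ∈ Icc (0 : ℝ) 1, deriv u a = 0 → |u a| < R := by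
    intro a ha hda
    by_contra! hRa
    have hfa := hbd a
    rw [hda, zero_add] at hfa
    linarith [hR (u a) hRa a ha]
  obtain ⟨a, ha, hmax⟩ := hp.exists_mem_Icc_isMaxOn_univ one_pos hu.continuous
  obtain ⟨b, hb, hmin⟩ := hp.exists_mem_Icc_isMinOn_univ one_pos hu.continuous
  have hua := small_of_deriv_eq_zero a ha (hmax.isLocalMax univ_mem).deriv_eq_zero
  have hub := small_of_deriv_eq_zero b hb (hmin.isLocalMin univ_mem).deriv_eq_zero
  have hat : u t ≤ u a := hmax (mem_univ t)
  have hbt : u b ≤ u t := hmin (mem_univ t)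
  rw [abs_lt] at hua hub
  exact abs_le.2 ⟨by linarith [le_max_left R 1], by linarith [le_max_left R 1]⟩

/-- **Proposition 1.4** (key a priori estimate: properness of `f` implies
properness of `F`). If `f` is a proper nonlinearity, then periodic functions
`u` with `‖u' + f(t,u)‖_∞ ≤ k` are uniformly bounded. -/
theorem stmt4 (f : ℝ → ℝ → ℝ) (hf : Nonlinearity f) (hproper : ProperNL f)
    (k : ℝ) (hk : 0 < k) :
    ∃ M : ℝ, 0 < M ∧ ∀ u : ℝ → ℝ, ContDiff ℝ 1 u → Periodic1 u →
      (∀ t, |deriv u t + f t (u t)| ≤ k) → ∀ t, |u t| ≤ M :=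
  stmt4_general f hproper k
end

section
/- Let q : ℝ → ℝ be continuous and 1-periodic and let m ∈ ℝ. Then there exists a unique pair (α, ω) where α ∈ ℝ and ω : ℝ → ℝ is continuously differentiable and 1-periodic, such that ∫₀¹ ω(t) dt = m and ω'(t) + q(t)·ω(t) = α for all t. Moreover, if m = 1 then ω(t) > 0 for all t. -/
open Real Function

namespace PeriodicLinearODE

variable (q : ℝ → ℝ)

noncomputable def integratingFactor (t : ℝ) : ℝ := exp (∫ s in (0 : ℝ)..t, q s)

noncomputable def integratingFactorIntegral (t : ℝ) : ℝ := ∫ s in (0 : ℝ)..t, integratingFactor q s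

noncomputable def solution (α c t : ℝ) : ℝ :=
  (c + α * integratingFactorIntegral q t) / integratingFactor q t

noncomputable def periodicRate : ℝ :=
  (integratingFactor q 1 - 1) / integratingFactorIntegral q 1

noncomputable def periodicSolution : ℝ → ℝ := solution q (periodicRate q) 1

variable {q}

theorem integratingFactor_pos (t : ℝ) : 0 < integratingFactor q t := exp_pos _

theorem integratingFactor_zero : integratingFactor q 0 = 1 := by
  simp [integratingFactor]

theorem integratingFactorIntegral_zero : integratingFactorIntegral q 0 = 0 :=
  intervalIntegral.integral_same

theorem solution_zero (α c : ℝ) : solution q α c 0 = c := by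
  simp [solution, integratingFactor_zero, integratingFactorIntegral_zero]

theorem solution_mul_periodicRate (c : ℝ) :
    solution q (c * periodicRate q) c = fun t => c * periodicSolution q t := by
  funext t
  simp only [periodicSolution, solution]
  ring

section Continuous

variable (hq : Continuous q)
include hq

theorem hasDerivAt_integratingFactor (t : ℝ) :
    HasDerivAt (integratingFactor q) (integratingFactor q t * q t) t :=
  (hq.integral_hasStrictDerivAt 0 t).hasDerivAt.exp

theorem continuous_integratingFactor : Continuous (integratingFactor q) :=
  continuous_iff_continuousAt.2 fun t => (hasDerivAt_integratingFactor hq t).continuousAt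

theorem hasDerivAt_integratingFactorIntegral (t : ℝ) :
    HasDerivAt (integratingFactorIntegral q) (integratingFactor q t) t :=
  ((continuous_integratingFactor hq).integral_hasStrictDerivAt 0 t).hasDerivAt

theorem strictMono_integratingFactorIntegral : StrictMono (integratingFactorIntegral q) :=
  strictMono_of_hasDerivAt_pos (hasDerivAt_integratingFactorIntegral hq) integratingFactor_pos

theorem integratingFactorIntegral_one_pos : 0 < integratingFactorIntegral q 1 := by
  simpa [integratingFactorIntegral_zero] using
    strictMono_integratingFactorIntegral hq zero_lt_one

theorem hasDerivAt_solution (α c t : ℝ) :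
    HasDerivAt (solution q α c) (α - q t * solution q α c t) t := by
  have hE := (integratingFactor_pos (q := q) t).ne'
  refine (((hasDerivAt_integratingFactorIntegral hq t).const_mul α).const_add c).div
    (hasDerivAt_integratingFactor hq t) hE |>.congr_deriv ?_
  simp only [solution]
  field_simp

theorem differentiable_solution (α c : ℝ) : Differentiable ℝ (solution q α c) :=
  fun t => (hasDerivAt_solution hq α c t).differentiableAt

theorem deriv_solution_add_mul (α c t : ℝ) :
    deriv (solution q α c) t + q t * solution q α c t = α := by
  rw [(hasDerivAt_solution hq α c t).deriv]
  ring

theorem contDiff_solution (α c : ℝ) : ContDiff ℝ 1 (solution q α c) := by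
  refine contDiff_one_iff_deriv.2 ⟨differentiable_solution hq α c, ?_⟩
  have hderiv : deriv (solution q α c) = fun t => α - q t * solution q α c t :=
    funext fun t => (hasDerivAt_solution hq α c t).deriv
  rw [hderiv]
  exact continuous_const.sub (hq.mul (differentiable_solution hq α c).continuous)

theorem eq_solution {α : ℝ} {ω : ℝ → ℝ} (hω : Differentiable ℝ ω)
    (hode : ∀ t, deriv ω t + q t * ω t = α) : ω = solution q α (ω 0) := by
  set g : ℝ → ℝ := fun t => integratingFactor q t * ω t - α * integratingFactorIntegral q t
  have hg : ∀ t, HasDerivAt g 0 t := fun t =>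
    ((hasDerivAt_integratingFactor hq t).mul (hω t).hasDerivAt).sub
      ((hasDerivAt_integratingFactorIntegral hq t).const_mul α) |>.congr_deriv
      (by linear_combination integratingFactor q t * hode t)
  funext t
  have hconst := is_const_of_deriv_eq_zero (fun t => (hg t).differentiableAt)
    (fun t => (hg t).deriv) t 0
  simp only [g, integratingFactor_zero, integratingFactorIntegral_zero, one_mul, mul_zero,
    sub_zero] at hconst
  rw [solution, eq_div_iff (integratingFactor_pos t).ne']
  linear_combination hconst

theorem solution_periodic (hqper : Periodic q 1) {α c : ℝ} (h1 : solution q α c 1 = c) :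
    Periodic (solution q α c) 1 := by
  have hshift : ∀ t, HasDerivAt (fun t => solution q α c (t + 1))
      (α - q t * solution q α c (t + 1)) t := fun t => by
    simpa only [hqper t] using (hasDerivAt_solution hq α c (t + 1)).comp_add_const t 1
  have heq := eq_solution hq (fun t => (hshift t).differentiableAt)
    (fun t => by rw [(hshift t).deriv]; ring)
  intro t
  simpa only [zero_add, h1] using congrFun heq t

theorem periodic_solution_iff (hqper : Periodic q 1) {α c : ℝ} :
    Periodic (solution q α c) 1 ↔ α = c * periodicRate q := by
  have hP := (integratingFactorIntegral_one_pos hq).ne'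
  have hE := (integratingFactor_pos (q := q) 1).ne'
  refine ⟨fun hper => ?_, fun hα => solution_periodic hq hqper ?_⟩
  · have h1 := hper 0
    rw [zero_add, solution_zero, solution, div_eq_iff hE] at h1
    rw [periodicRate, mul_div_assoc', eq_div_iff hP]
    linear_combination h1
  · rw [solution, div_eq_iff hE, hα, periodicRate]
    field_simp
    ring

theorem periodicSolution_periodic (hqper : Periodic q 1) : Periodic (periodicSolution q) 1 :=
  (periodic_solution_iff hq hqper).2 (one_mul _).symm

theorem periodicSolution_pos (hqper : Periodic q 1) (t : ℝ) : 0 < periodicSolution q t := by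
  obtain ⟨s, ⟨hs0, hs1⟩, hts⟩ := (periodicSolution_periodic hq hqper).exists_mem_Ico₀ one_pos t
  rw [hts]
  have hmono := (strictMono_integratingFactorIntegral hq).monotone
  have hP0 : 0 ≤ integratingFactorIntegral q s :=
    integratingFactorIntegral_zero (q := q) ▸ hmono hs0
  have hP1 : integratingFactorIntegral q s ≤ integratingFactorIntegral q 1 := hmono hs1.le
  have hα : 1 + periodicRate q * integratingFactorIntegral q 1 = integratingFactor q 1 := by
    rw [periodicRate, div_mul_cancel₀ _ (integratingFactorIntegral_one_pos hq).ne']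
    ring
  have hnum : 0 < 1 + periodicRate q * integratingFactorIntegral q s := by
    rcases le_or_gt 0 (periodicRate q) with hr | hr
    · nlinarith
    · nlinarith [integratingFactor_pos (q := q) 1, mul_le_mul_of_nonpos_left hP1 hr.le]
  exact div_pos hnum (integratingFactor_pos s)

theorem exists_eq_mul_periodicSolution (hqper : Periodic q 1) {α : ℝ} {ω : ℝ → ℝ}
    (hω : Differentiable ℝ ω) (hper : Periodic ω 1) (hode : ∀ t, deriv ω t + q t * ω t = α) :
    ∃ c, α = c * periodicRate q ∧ ω = fun t => c * periodicSolution q t := by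
  have hsol := eq_solution hq hω hode
  have hα : α = ω 0 * periodicRate q :=
    (periodic_solution_iff hq hqper).1 (hsol ▸ hper)
  exact ⟨ω 0, hα, hsol.trans (by rw [hα, solution_mul_periodicRate])⟩

end Continuous

end PeriodicLinearODE

open PeriodicLinearODE

/-- **Lemma 1.5**. For continuous 1-periodic `q` and `m ∈ ℝ` there is a unique
pair `(α, ω)` with `ω` a `C¹` 1-periodic function of mean `m` satisfying
`ω' + q·ω = α`; moreover for `m = 1` the solution `ω` is strictly positive. -/
theorem stmt5 (q : ℝ → ℝ) (hq : Continuous q) (hqper : Periodic1 q) (m : ℝ) :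
    (∃! p : ℝ × (ℝ → ℝ),
      ContDiff ℝ 1 p.2 ∧ Periodic1 p.2 ∧ (∫ t in (0:ℝ)..1, p.2 t) = m ∧
      ∀ t, deriv p.2 t + q t * p.2 t = p.1) ∧
    (m = 1 → ∀ (α : ℝ) (ω : ℝ → ℝ),
      ContDiff ℝ 1 ω → Periodic1 ω → (∫ t in (0:ℝ)..1, ω t) = m →
      (∀ t, deriv ω t + q t * ω t = α) → ∀ t, 0 < ω t) := by
  set M := ∫ t in (0:ℝ)..1, periodicSolution q t
  have hM : 0 < M := intervalIntegral.intervalIntegral_pos_of_pos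
    ((contDiff_solution hq _ _).continuous.intervalIntegrable 0 1)
    (periodicSolution_pos hq hqper) one_pos
  have hmean : ∀ c, ∫ t in (0:ℝ)..1, c * periodicSolution q t = c * M := fun c =>
    intervalIntegral.integral_const_mul c _
  have hperiodic : ∀ {α ω}, ContDiff ℝ 1 ω → Periodic1 ω → (∀ t, deriv ω t + q t * ω t = α) →
      ∃ c, α = c * periodicRate q ∧ ω = fun t => c * periodicSolution q t :=
    fun hω hper hode =>
      exists_eq_mul_periodicSolution hq hqper (hω.differentiable one_ne_zero) hper hode
  refine ⟨⟨(m / M * periodicRate q, fun t => m / M * periodicSolution q t), ?_, ?_⟩, ?_⟩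
  · rw [← solution_mul_periodicRate]
    exact ⟨contDiff_solution hq _ _, (periodic_solution_iff hq hqper).2 rfl,
      by rw [solution_mul_periodicRate, hmean, div_mul_cancel₀ _ hM.ne'],
      deriv_solution_add_mul hq _ _⟩
  · rintro ⟨α, ω⟩ ⟨hω, hper, hint, hode⟩
    obtain ⟨c, rfl, rfl⟩ := hperiodic hω hper hode
    have hc : c = m / M := by rw [← hint, hmean, mul_div_cancel_right₀ _ hM.ne']
    rw [hc]
  · rintro rfl α ω hω hper hint hode t
    obtain ⟨c, -, rfl⟩ := hperiodic hω hper hode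
    rw [hmean] at hint
    exact mul_pos (pos_of_mul_pos_left (hint ▸ one_pos) hM.le) (periodicSolution_pos hq hqper t)
end

section
/- Let q : ℝ → ℝ be continuous and 1-periodic, set Q = ∫₀¹ q(s) ds, and let w(t) = exp(Q·t − ∫₀ᵗ q(s) ds). Let α = α(q) be the unique real number for which the equation ω' + q·ω = α admits a continuously differentiable 1-periodic solution of mean 1. Then ∫₀¹ q(t)·w(t) dt = Q · ∫₀¹ w(t) dt, and there exist strictly positive real numbers P₁, P₂ (depending on q) such that ∫₀¹ q(t)·w(t) dt = P₁·Q and α = P₂·Q. In particular, the three quantities Q, ∫₀¹ q·w, and α have the same sign, and one of them vanishes if and only if all do. -/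
open Real intervalIntegral

theorem exists_pos_exp_sub_one_eq_mul (x : ℝ) : ∃ c, 0 < c ∧ exp x - 1 = c * x := by
  rcases lt_trichotomy x 0 with hx | rfl | hx
  · refine ⟨(exp x - 1) / x, div_pos_of_neg_of_neg ?_ hx, (div_mul_cancel₀ _ hx.ne).symm⟩
    linarith [exp_lt_one_iff.2 hx]
  · exact ⟨1, one_pos, by simp⟩
  · refine ⟨(exp x - 1) / x, div_pos ?_ hx, (div_mul_cancel₀ _ hx.ne').symm⟩
    linarith [one_lt_exp_iff.2 hx]

theorem integral_mul_eq_mul_integral_of_hasDerivAt {q w : ℝ → ℝ} {Q a b : ℝ} (hq : Continuous q)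
    (hw : ∀ t, HasDerivAt w ((Q - q t) * w t) t) (hwab : w b = w a) :
    ∫ t in a..b, q t * w t = Q * ∫ t in a..b, w t := by
  have hwc : Continuous w := continuous_iff_continuousAt.2 fun t => (hw t).continuousAt
  have hFTC : ∫ t in a..b, (Q - q t) * w t = 0 := by
    rw [integral_eq_sub_of_hasDerivAt (fun t _ => hw t)
      (((continuous_const.sub hq).mul hwc).intervalIntegrable _ _), hwab, sub_self]
  simp only [sub_mul] at hFTC
  rw [integral_sub (f := fun t => Q * w t) (g := fun t => q t * w t)
    ((continuous_const.mul hwc).intervalIntegrable _ _)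
    ((hq.mul hwc).intervalIntegrable _ _), integral_const_mul] at hFTC
  linarith

section IntegratingFactor

variable {q ω : ℝ → ℝ} {α : ℝ}

theorem hasDerivAt_exp_mul_sub_integral (hq : Continuous q) (Q t : ℝ) :
    HasDerivAt (fun t => exp (Q * t - ∫ s in (0:ℝ)..t, q s))
      ((Q - q t) * exp (Q * t - ∫ s in (0:ℝ)..t, q s)) t := by
  have := ((hasDerivAt_id t).const_mul Q).sub (hq.integral_hasStrictDerivAt 0 t).hasDerivAt
  simpa [mul_comm] using this.exp

theorem continuous_exp_integral (hq : Continuous q) :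
    Continuous fun s => exp (∫ r in (0:ℝ)..s, q r) :=
  continuous_exp.comp (continuous_primitive (fun _ _ => hq.intervalIntegrable _ _) 0)

theorem mul_exp_integral_eq (hq : Continuous q) (hω : Differentiable ℝ ω)
    (hode : ∀ t, deriv ω t + q t * ω t = α) (t : ℝ) :
    ω t * exp (∫ s in (0:ℝ)..t, q s) = ω 0 + α * ∫ s in (0:ℝ)..t, exp (∫ r in (0:ℝ)..s, q r) := by
  have hderiv : ∀ s, HasDerivAt (fun s => ω s * exp (∫ r in (0:ℝ)..s, q r))
      (α * exp (∫ r in (0:ℝ)..s, q r)) s := by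
    intro s
    refine ((hω s).hasDerivAt.mul (hq.integral_hasStrictDerivAt 0 s).hasDerivAt.exp).congr_deriv ?_
    rw [← hode s]
    ring
  have := integral_eq_sub_of_hasDerivAt (fun s _ => hderiv s)
    ((continuous_const.mul (continuous_exp_integral hq)).intervalIntegrable 0 t)
  rw [integral_const_mul] at this
  simp only [integral_same, exp_zero, mul_one] at this
  linarith

theorem apply_zero_pos_of_integral_eq_one (hq : Continuous q) (hω : Differentiable ℝ ω)
    (hode : ∀ t, deriv ω t + q t * ω t = α) (hω01 : ω 1 = ω 0)
    (hmean : ∫ t in (0:ℝ)..1, ω t = 1) : 0 < ω 0 := by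
  set E := fun s => exp (∫ r in (0:ℝ)..s, q r) with hE
  have hrep := mul_exp_integral_eq hq hω hode
  have hG : ∀ t ∈ Set.Icc (0:ℝ) 1,
      0 ≤ ∫ s in (0:ℝ)..t, E s ∧ ∫ s in (0:ℝ)..t, E s ≤ ∫ s in (0:ℝ)..1, E s := fun t ht =>
    ⟨integral_nonneg ht.1 fun s _ => (exp_pos _).le,
      integral_mono_interval le_rfl ht.1 ht.2 (Filter.Eventually.of_forall fun s => (exp_pos _).le)
        ((continuous_exp_integral hq).intervalIntegrable _ _)⟩
  by_contra! hω0
  have hend : ω 0 + α * ∫ s in (0:ℝ)..1, E s ≤ 0 := by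
    rw [← hrep 1, hω01]
    exact mul_nonpos_of_nonpos_of_nonneg hω0 (exp_pos _).le
  have hnonpos : ∀ t ∈ Set.Icc (0:ℝ) 1, ω t ≤ 0 := by
    intro t ht
    obtain ⟨hG0, hG1⟩ := hG t ht
    have : ω t * E t ≤ 0 := by
      rw [hE, hrep t]
      rcases le_total 0 α with hα | hα <;> nlinarith
    exact nonpos_of_mul_nonpos_left this (exp_pos _)
  have : ∫ t in (0:ℝ)..1, ω t ≤ ∫ _ in (0:ℝ)..1, (0:ℝ) :=
    integral_mono_on zero_le_one (hω.continuous.intervalIntegrable _ _)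
      (continuous_const.intervalIntegrable _ _) hnonpos
  rw [hmean, integral_zero] at this
  linarith

end IntegratingFactor

theorem stmt6_general (q : ℝ → ℝ) (hq : Continuous q)
    (Q : ℝ) (hQ : Q = ∫ s in (0:ℝ)..1, q s)
    (w : ℝ → ℝ)
    (hw : ∀ t, w t = Real.exp (Q * t - ∫ s in (0:ℝ)..t, q s))
    (α : ℝ)
    (hα : ∃ ω : ℝ → ℝ, ContDiff ℝ 1 ω ∧ Periodic1 ω ∧
      (∫ t in (0:ℝ)..1, ω t) = 1 ∧ ∀ t, deriv ω t + q t * ω t = α) :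
    (∫ t in (0:ℝ)..1, q t * w t) = Q * ∫ t in (0:ℝ)..1, w t ∧
    (∃ P₁ : ℝ, 0 < P₁ ∧ (∫ t in (0:ℝ)..1, q t * w t) = P₁ * Q) ∧
    (∃ P₂ : ℝ, 0 < P₂ ∧ α = P₂ * Q) := by
  obtain ⟨ω, hω, hωper, hmean, hode⟩ := hα
  obtain rfl : w = fun t => exp (Q * t - ∫ s in (0:ℝ)..t, q s) := funext hw
  have hw' := hasDerivAt_exp_mul_sub_integral hq Q
  have hqw : ∫ t in (0:ℝ)..1, q t * exp (Q * t - ∫ s in (0:ℝ)..t, q s) =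
      Q * ∫ t in (0:ℝ)..1, exp (Q * t - ∫ s in (0:ℝ)..t, q s) :=
    integral_mul_eq_mul_integral_of_hasDerivAt hq hw' (by simp [← hQ])
  have hw_int : 0 < ∫ t in (0:ℝ)..1, exp (Q * t - ∫ s in (0:ℝ)..t, q s) :=
    intervalIntegral_pos_of_pos
      ((continuous_iff_continuousAt.2 fun t => (hw' t).continuousAt).intervalIntegrable _ _)
      (fun _ => exp_pos _) one_pos
  refine ⟨hqw, ⟨_, hw_int, by rw [hqw, mul_comm]⟩, ?_⟩
  have hωd : Differentiable ℝ ω := hω.differentiable one_ne_zero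
  have hω01 : ω 1 = ω 0 := by simpa using hωper 0
  have hω0 := apply_zero_pos_of_integral_eq_one hq hωd hode hω01 hmean
  have hbal := mul_exp_integral_eq hq hωd hode 1
  rw [hω01, ← hQ] at hbal
  have hE_int : 0 < ∫ s in (0:ℝ)..1, exp (∫ r in (0:ℝ)..s, q r) :=
    intervalIntegral_pos_of_pos ((continuous_exp_integral hq).intervalIntegrable _ _)
      (fun _ => exp_pos _) one_pos
  obtain ⟨c, hc, hcQ⟩ := exists_pos_exp_sub_one_eq_mul Q
  refine ⟨ω 0 * c / ∫ s in (0:ℝ)..1, exp (∫ r in (0:ℝ)..s, q r), by positivity, ?_⟩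
  field_simp
  linear_combination ω 0 * hcQ - hbal

/-- **Lemma 1.6**. With `q` continuous 1-periodic, `Q = ∫₀¹ q`,
`w t = exp (Q t − ∫₀ᵗ q)` and `α` the unique real number for which
`ω' + q ω = α` has a `C¹` 1-periodic solution of mean 1, we have
`∫₀¹ q w = Q ∫₀¹ w` and both `∫₀¹ q w` and `α` are strictly positive
multiples of `Q`. -/
theorem stmt6 (q : ℝ → ℝ) (hq : Continuous q) (hqper : Periodic1 q)
    (Q : ℝ) (hQ : Q = ∫ s in (0:ℝ)..1, q s)
    (w : ℝ → ℝ)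
    (hw : ∀ t, w t = Real.exp (Q * t - ∫ s in (0:ℝ)..t, q s))
    (α : ℝ)
    (hα : ∃ ω : ℝ → ℝ, ContDiff ℝ 1 ω ∧ Periodic1 ω ∧
      (∫ t in (0:ℝ)..1, ω t) = 1 ∧ ∀ t, deriv ω t + q t * ω t = α) :
    (∫ t in (0:ℝ)..1, q t * w t) = Q * ∫ t in (0:ℝ)..1, w t ∧
    (∃ P₁ : ℝ, 0 < P₁ ∧ (∫ t in (0:ℝ)..1, q t * w t) = P₁ * Q) ∧
    (∃ P₂ : ℝ, 0 < P₂ ∧ α = P₂ * Q) :=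
  stmt6_general q hq Q hQ w hw α hα
end

section
/- Let f : ℝ × ℝ → ℝ be a nonlinearity, v : ℝ → ℝ continuous and 1-periodic, and u a periodic solution of u' + f(t,u) = v. Let J be an open interval containing u(0) such that for every c ∈ J the (unique) solution of the initial value problem y'(t) + f(t,y(t)) = v(t), y(0) = c, is defined on [0,1], and define the return map ρ : J → ℝ by ρ(c) = y(1). Then ρ(u(0)) = u(0), the map ρ is differentiable at u(0), and ρ'(u(0)) = exp(−∫₀¹ D₂f(t,u(t)) dt) > 0. In particular ρ'(u(0)) = 1 if and only if ∫₀¹ D₂f(t,u(t)) dt = 0, i.e. if and only if u is a critical point of the operator F(u) = u' + f(t,u). -/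
/-!
For two solutions `u`, `w` of `y' + f(t,y) = v`, the difference `z = w - u` solves the linear
equation `z' = -g(t) z`, where `g(t) = ∫₀¹ D₂f(t, u + θ z) dθ` is the mean slope of `f t` between
`u t` and `w t`; hence `w 1 - u 1 = (w 0 - u 0) · exp (-∫₀¹ g)`, which for `w = y c` reads
`ρ c - u 0 = (c - u 0) · exp (-∫₀¹ g_c)`. As long as `|z| ≤ 1`, `|g|` is bounded by a constant `M`,
and a continuity argument turns the formula into `|y c - u| ≤ |c - u 0| e^M` on `[0,1]` for `c`
close to `u 0`. So `g_c → D₂f(·, u)` boundedly, dominated convergence gives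
`∫₀¹ g_c → ∫₀¹ D₂f(t, u t) dt`, and the factorisation of `ρ c - u 0` yields the derivative.
-/

open Set Filter Topology Function MeasureTheory
open scoped Interval

noncomputable def segmentSlope (φ : ℝ → ℝ) (a b : ℝ) : ℝ :=
  ∫ θ in (0:ℝ)..1, deriv φ (a + θ * (b - a))

@[simp] lemma segmentSlope_self (φ : ℝ → ℝ) (a : ℝ) : segmentSlope φ a a = deriv φ a := by
  simp [segmentSlope]

lemma sub_eq_mul_segmentSlope {φ : ℝ → ℝ} (hφ : ContDiff ℝ 1 φ) (a b : ℝ) :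
    φ b - φ a = (b - a) * segmentSlope φ a b := by
  have hderiv : ∀ θ ∈ uIcc (0:ℝ) 1, HasDerivAt (fun θ => φ (a + θ * (b - a)))
      (deriv φ (a + θ * (b - a)) * (b - a)) θ := fun θ _ =>
    (hφ.differentiable one_ne_zero _).hasDerivAt.comp θ
      ((((hasDerivAt_id θ).mul_const (b - a)).const_add a).congr_deriv (one_mul _))
  have hcont : Continuous fun θ => deriv φ (a + θ * (b - a)) * (b - a) :=
    ((hφ.continuous_deriv le_rfl).comp (by fun_prop)).mul continuous_const
  rw [segmentSlope, mul_comm, ← intervalIntegral.integral_mul_const,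
    intervalIntegral.integral_eq_sub_of_hasDerivAt hderiv (hcont.intervalIntegrable _ _)]
  simp

lemma abs_segmentSlope_le {φ : ℝ → ℝ} {a b M : ℝ}
    (h : ∀ x, |x - a| ≤ |b - a| → |deriv φ x| ≤ M) : |segmentSlope φ a b| ≤ M := by
  have := intervalIntegral.norm_integral_le_of_norm_le_const (a := 0) (b := 1) (C := M)
    (f := fun θ => deriv φ (a + θ * (b - a))) fun θ hθ => by
      rw [uIoc_of_le zero_le_one] at hθ
      refine h _ ?_
      rw [add_sub_cancel_left, abs_mul]
      exact mul_le_of_le_one_left (abs_nonneg _) (abs_le.2 ⟨by linarith [hθ.1], hθ.2⟩)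
  simpa [segmentSlope] using this

lemma contDiff_apply_of_uncurry {f : ℝ → ℝ → ℝ} (hf : ContDiff ℝ 1 (uncurry f)) (t : ℝ) :
    ContDiff ℝ 1 (f t) :=
  hf.comp (contDiff_const.prodMk contDiff_id)

lemma continuous_deriv_apply_of_uncurry {f : ℝ → ℝ → ℝ} (hf : ContDiff ℝ 1 (uncurry f)) :
    Continuous fun p : ℝ × ℝ => deriv (f p.1) p.2 := by
  have h : ∀ p : ℝ × ℝ, deriv (f p.1) p.2 = fderiv ℝ (uncurry f) p (0, 1) := fun p =>
    ((hf.differentiable one_ne_zero).differentiableAt.hasFDerivAt.comp_hasDerivAt p.2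
      ((hasDerivAt_const p.2 p.1).prodMk (hasDerivAt_id p.2))).deriv
  simp_rw [h]
  exact (hf.continuous_fderiv one_ne_zero).clm_apply continuous_const

lemma continuous_segmentSlope {f : ℝ → ℝ → ℝ} (hf : ContDiff ℝ 1 (uncurry f)) :
    Continuous fun p : ℝ × ℝ × ℝ => segmentSlope (f p.1) p.2.1 p.2.2 := by
  refine intervalIntegral.continuous_parametric_intervalIntegral_of_continuous' ?_ 0 1
  change Continuous ((fun p : ℝ × ℝ => deriv (f p.1) p.2) ∘
    fun q : (ℝ × ℝ × ℝ) × ℝ => (q.1.1, q.1.2.1 + q.2 * (q.1.2.2 - q.1.2.1)))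
  exact (continuous_deriv_apply_of_uncurry hf).comp (by fun_prop)

lemma eq_mul_exp_neg_integral_of_hasDerivWithinAt {z g : ℝ → ℝ} {a b : ℝ} (hab : a ≤ b)
    (hg : Continuous g) (hz : ContinuousOn z (Icc a b))
    (hz' : ∀ t ∈ Ico a b, HasDerivWithinAt z (-(g t * z t)) (Ici t) t) :
    z b = z a * Real.exp (-∫ t in a..b, g t) := by
  set E := fun t => Real.exp (∫ s in a..t, g s)
  have hE : ∀ t, HasDerivAt E (E t * g t) t := fun t =>
    (hg.integral_hasStrictDerivAt a t).hasDerivAt.exp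
  have hEcont : Continuous E := continuous_iff_continuousAt.2 fun t => (hE t).continuousAt
  have hconst := constant_of_has_deriv_right_zero (f := fun t => z t * E t)
    (hz.mul hEcont.continuousOn)
    (fun t ht => ((hz' t ht).mul (hE t).hasDerivWithinAt).congr_deriv (by ring))
    b (right_mem_Icc.2 hab)
  simp only [E, intervalIntegral.integral_same, Real.exp_zero, mul_one] at hconst
  rw [Real.exp_neg, ← hconst, mul_inv_cancel_right₀ (Real.exp_ne_zero _)]

lemma forall_mem_Icc_of_forall_Ico_imp {P : ℝ → Prop} {a b : ℝ}
    (hclosed : IsClosed {t ∈ Icc a b | ¬ P t})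
    (hstep : ∀ T ∈ Icc a b, (∀ s ∈ Ico a T, P s) → P T) : ∀ t ∈ Icc a b, P t := by
  by_contra! ⟨t, ht, hPt⟩
  have hbdd : BddBelow {t ∈ Icc a b | ¬ P t} := ⟨a, fun s hs => hs.1.1⟩
  have hmin := hclosed.csInf_mem ⟨t, ht, hPt⟩ hbdd
  refine hmin.2 (hstep _ hmin.1 fun s hs => ?_)
  by_contra hPs
  exact (not_le.2 hs.2) (csInf_le hbdd ⟨⟨hs.1, hs.2.le.trans hmin.1.2⟩, hPs⟩)

lemma hasDerivAt_of_eventually_sub_eq_mul {φ k : ℝ → ℝ} {x L : ℝ}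
    (hφ : ∀ᶠ c in 𝓝 x, φ c - φ x = (c - x) * k c) (hk : Tendsto k (𝓝 x) (𝓝 L)) :
    HasDerivAt φ L x := by
  rw [hasDerivAt_iff_tendsto_slope]
  refine (hk.mono_left nhdsWithin_le_nhds).congr' ?_
  filter_upwards [nhdsWithin_le_nhds hφ, self_mem_nhdsWithin] with c hc hne
  rw [slope_def_field, hc, mul_div_cancel_left₀ _ (sub_ne_zero.2 hne)]

def IsSolutionOnIcc01 (f : ℝ → ℝ → ℝ) (v w : ℝ → ℝ) : Prop :=
  ∀ t ∈ Icc (0:ℝ) 1, HasDerivAt w (v t - f t (w t)) t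

/-- `u` and `w` are clamped to `[0,1]` (outside it `w` need not solve the equation), so that the
coefficient is continuous on all of `ℝ`. -/
noncomputable def secantCoeff (f : ℝ → ℝ → ℝ) (u w : ℝ → ℝ) (t : ℝ) : ℝ :=
  segmentSlope (f t) (IccExtend zero_le_one ((Icc 0 1).domRestrict u) t)
    (IccExtend zero_le_one ((Icc 0 1).domRestrict w) t)

section Solutions

variable {f : ℝ → ℝ → ℝ} {v u w : ℝ → ℝ}

lemma IsSolutionOnIcc01.continuousOn (hw : IsSolutionOnIcc01 f v w) : ContinuousOn w (Icc 0 1) :=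
  fun t ht => (hw t ht).continuousAt.continuousWithinAt

lemma secantCoeff_of_mem {t : ℝ} (ht : t ∈ Icc (0:ℝ) 1) :
    secantCoeff f u w t = segmentSlope (f t) (u t) (w t) := by
  simp only [secantCoeff, IccExtend_of_mem _ _ ht, domRestrict_apply]

lemma continuous_secantCoeff (hf : ContDiff ℝ 1 (uncurry f)) (hu : ContinuousOn u (Icc 0 1))
    (hw : ContinuousOn w (Icc 0 1)) : Continuous (secantCoeff f u w) :=
  (continuous_segmentSlope hf).comp
    (continuous_id.prodMk (hu.domRestrict.Icc_extend'.prodMk hw.domRestrict.Icc_extend'))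

lemma sub_eq_mul_exp_neg_integral_secantCoeff (hf : ContDiff ℝ 1 (uncurry f))
    (hu : IsSolutionOnIcc01 f v u) (hw : IsSolutionOnIcc01 f v w) {T : ℝ} (hT : T ∈ Icc (0:ℝ) 1) :
    w T - u T = (w 0 - u 0) * Real.exp (-∫ t in 0..T, secantCoeff f u w t) := by
  refine eq_mul_exp_neg_integral_of_hasDerivWithinAt (z := fun t => w t - u t) hT.1
    (continuous_secantCoeff hf hu.continuousOn hw.continuousOn)
    ((hw.continuousOn.sub hu.continuousOn).mono (Icc_subset_Icc_right hT.2)) fun t ht => ?_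
  have ht1 : t ∈ Icc (0:ℝ) 1 := ⟨ht.1, ht.2.le.trans hT.2⟩
  have hsecant := sub_eq_mul_segmentSlope (contDiff_apply_of_uncurry hf t) (u t) (w t)
  refine ((hw t ht1).sub (hu t ht1)).hasDerivWithinAt.congr_deriv ?_
  rw [secantCoeff_of_mem ht1]
  linarith

lemma exists_bound_deriv_on_tube (hf : ContDiff ℝ 1 (uncurry f))
    (hu : ContinuousOn u (Icc 0 1)) :
    ∃ M, ∀ t ∈ Icc (0:ℝ) 1, ∀ x, |x - u t| ≤ 1 → |deriv (f t) x| ≤ M := by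
  have hK : IsCompact ((fun q : ℝ × ℝ => (q.1, u q.1 + q.2)) '' (Icc 0 1 ×ˢ Icc (-1) 1)) :=
    (isCompact_Icc.prod isCompact_Icc).image_of_continuousOn (continuousOn_fst.prodMk
      ((hu.comp continuousOn_fst fun q hq => hq.1).add continuousOn_snd))
  obtain ⟨M, hM⟩ := hK.exists_bound_of_continuousOn
    (continuous_deriv_apply_of_uncurry hf).continuousOn
  exact ⟨M, fun t ht x hx => hM (t, x) ⟨(t, x - u t), ⟨ht, abs_le.1 hx⟩, by simp⟩⟩

lemma abs_sub_le_mul_exp_of_forall_Ico (hf : ContDiff ℝ 1 (uncurry f))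
    (hu : IsSolutionOnIcc01 f v u)
    {M : ℝ} (hM : ∀ t ∈ Icc (0:ℝ) 1, ∀ x, |x - u t| ≤ 1 → |deriv (f t) x| ≤ M)
    (hw : IsSolutionOnIcc01 f v w) {T : ℝ} (hT : T ∈ Icc (0:ℝ) 1)
    (hclose : ∀ s ∈ Ico 0 T, |w s - u s| ≤ 1) :
    |w T - u T| ≤ |w 0 - u 0| * Real.exp M := by
  have hM0 : 0 ≤ M := (abs_nonneg _).trans (hM 0 ⟨le_rfl, zero_le_one⟩ (u 0) (by simp))
  have hcoeff : ∀ᵐ s, s ∈ Ι 0 T → ‖secantCoeff f u w s‖ ≤ M := by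
    filter_upwards [volume.ae_ne T] with s hsT hs
    rw [uIoc_of_le hT.1] at hs
    have hs1 : s ∈ Icc (0:ℝ) 1 := ⟨hs.1.le, hs.2.trans hT.2⟩
    rw [Real.norm_eq_abs, secantCoeff_of_mem hs1]
    exact abs_segmentSlope_le fun x hx =>
      hM s hs1 x (hx.trans (hclose s ⟨hs.1.le, lt_of_le_of_ne hs.2 hsT⟩))
  have hint : |∫ s in 0..T, secantCoeff f u w s| ≤ M :=
    calc _ ≤ M * |T - 0| := intervalIntegral.norm_integral_le_of_norm_le_const_ae hcoeff
      _ ≤ M * 1 := by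
        gcongr
        rw [sub_zero, abs_of_nonneg hT.1]
        exact hT.2
      _ = M := mul_one M
  rw [sub_eq_mul_exp_neg_integral_secantCoeff hf hu hw hT, abs_mul, Real.abs_exp]
  gcongr
  linarith [(abs_le.1 hint).1]

lemma abs_sub_le_of_abs_sub_zero_mul_lt_one (hf : ContDiff ℝ 1 (uncurry f))
    (hu : IsSolutionOnIcc01 f v u) {M : ℝ}
    (hM : ∀ t ∈ Icc (0:ℝ) 1, ∀ x, |x - u t| ≤ 1 → |deriv (f t) x| ≤ M)
    (hw : IsSolutionOnIcc01 f v w)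
    (hsmall : |w 0 - u 0| * Real.exp M < 1) :
    ∀ t ∈ Icc (0:ℝ) 1, |w t - u t| ≤ |w 0 - u 0| * Real.exp M := by
  have hclosed : IsClosed {t ∈ Icc (0:ℝ) 1 | ¬ |w t - u t| < 1} := by
    simp only [not_lt]
    exact (hw.continuousOn.sub hu.continuousOn).abs.preimage_isClosed_of_isClosed
      isClosed_Icc isClosed_Ici
  have hlt : ∀ t ∈ Icc (0:ℝ) 1, |w t - u t| < 1 :=
    forall_mem_Icc_of_forall_Ico_imp hclosed fun T hT h =>
      (abs_sub_le_mul_exp_of_forall_Ico hf hu hM hw hT fun s hs => (h s hs).le).trans_lt hsmall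
  exact fun t ht => abs_sub_le_mul_exp_of_forall_Ico hf hu hM hw ht fun s hs =>
    (hlt s ⟨hs.1, hs.2.le.trans ht.2⟩).le

end Solutions

lemma tendsto_integral_secantCoeff {f : ℝ → ℝ → ℝ} {v u : ℝ → ℝ}
    (hf : ContDiff ℝ 1 (uncurry f)) (hu : IsSolutionOnIcc01 f v u) {y : ℝ → ℝ → ℝ}
    (hy : ∀ᶠ c in 𝓝 (u 0), y c 0 = c ∧ IsSolutionOnIcc01 f v (y c)) :
    Tendsto (fun c => ∫ t in 0..1, secantCoeff f u (y c) t) (𝓝 (u 0))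
      (𝓝 (∫ t in 0..1, deriv (f t) (u t))) := by
  obtain ⟨M, hM⟩ := exists_bound_deriv_on_tube hf hu.continuousOn
  have hδ : Tendsto (fun c => |c - u 0| * Real.exp M) (𝓝 (u 0)) (𝓝 0) := by
    have hcont : Continuous fun c => |c - u 0| * Real.exp M := by fun_prop
    simpa using hcont.tendsto (u 0)
  have hnear : ∀ᶠ c in 𝓝 (u 0), ∀ t ∈ Icc (0:ℝ) 1, |y c t - u t| ≤ |c - u 0| * Real.exp M := by
    filter_upwards [hy, hδ.eventually_lt_const zero_lt_one] with c ⟨hc0, hsol⟩ hsmall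
    have := abs_sub_le_of_abs_sub_zero_mul_lt_one hf hu hM hsol (by rwa [hc0])
    rwa [hc0] at this
  have hIoc : ∀ t ∈ Ι (0:ℝ) 1, t ∈ Icc (0:ℝ) 1 := fun t ht => by
    rw [uIoc_of_le zero_le_one] at ht
    exact Ioc_subset_Icc_self ht
  refine intervalIntegral.tendsto_integral_filter_of_dominated_convergence (fun _ => M) ?_ ?_
    intervalIntegrable_const (ae_of_all _ fun t ht => ?_)
  · filter_upwards [hy] with c hc
    exact (continuous_secantCoeff hf hu.continuousOn hc.2.continuousOn).aestronglyMeasurable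
  · filter_upwards [hnear, hδ.eventually_lt_const zero_lt_one] with c hc hsmall
    refine ae_of_all _ fun t ht => ?_
    rw [Real.norm_eq_abs, secantCoeff_of_mem (hIoc t ht)]
    exact abs_segmentSlope_le fun x hx =>
      hM t (hIoc t ht) x (hx.trans ((hc t (hIoc t ht)).trans hsmall.le))
  · have hyt : Tendsto (fun c => y c t) (𝓝 (u 0)) (𝓝 (u t)) :=
      tendsto_iff_norm_sub_tendsto_zero.2 <| squeeze_zero' (.of_forall fun _ => norm_nonneg _)
        (hnear.mono fun c hc => hc t (hIoc t ht)) hδ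
    rw [← segmentSlope_self]
    refine ((continuous_segmentSlope hf).tendsto (t, u t, u t) |>.comp
      (tendsto_const_nhds.prodMk_nhds (tendsto_const_nhds.prodMk_nhds hyt))).congr fun c => ?_
    exact (secantCoeff_of_mem (hIoc t ht)).symm

theorem stmt7_general (f : ℝ → ℝ → ℝ) (hf : Nonlinearity f)
    (v : ℝ → ℝ)
    (u : ℝ → ℝ) (hu : ContDiff ℝ 1 u) (huper : Periodic1 u)
    (husol : ∀ t, deriv u t + f t (u t) = v t)
    (p q : ℝ) (hpq : u 0 ∈ Set.Ioo p q)
    (y : ℝ → ℝ → ℝ)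
    (hy : ∀ c ∈ Set.Ioo p q, y c 0 = c ∧
      ∀ t ∈ Set.Icc (0:ℝ) 1, HasDerivAt (y c) (v t - f t (y c t)) t)
    (ρ : ℝ → ℝ) (hρ : ∀ c, ρ c = y c 1) :
    ρ (u 0) = u 0 ∧
    HasDerivAt ρ (Real.exp (-(∫ t in (0:ℝ)..1, deriv (f t) (u t)))) (u 0) ∧
    0 < Real.exp (-(∫ t in (0:ℝ)..1, deriv (f t) (u t))) ∧
    (Real.exp (-(∫ t in (0:ℝ)..1, deriv (f t) (u t))) = 1 ↔
      (∫ t in (0:ℝ)..1, deriv (f t) (u t)) = 0) := by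
  have hfC : ContDiff ℝ 1 (uncurry f) := hf.1.of_le (by exact_mod_cast le_top)
  have huSol : IsSolutionOnIcc01 f v u := fun t _ => by
    rw [← husol t, add_sub_cancel_right]
    exact (hu.differentiable one_ne_zero t).hasDerivAt
  have hyNear : ∀ᶠ c in 𝓝 (u 0), y c 0 = c ∧ IsSolutionOnIcc01 f v (y c) :=
    eventually_of_mem (isOpen_Ioo.mem_nhds hpq) hy
  have hreturn : ∀ᶠ c in 𝓝 (u 0),
      ρ c - u 0 = (c - u 0) * Real.exp (-∫ t in 0..1, secantCoeff f u (y c) t) := by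
    filter_upwards [hyNear] with c ⟨hc0, hsol⟩
    have := sub_eq_mul_exp_neg_integral_secantCoeff hfC huSol hsol (right_mem_Icc.2 zero_le_one)
    rwa [hc0, show u 1 = u 0 by simpa using huper 0, ← hρ] at this
  have hfixed : ρ (u 0) = u 0 := by simpa [sub_eq_zero] using hreturn.self_of_nhds
  refine ⟨hfixed, ?_, Real.exp_pos _, by rw [Real.exp_eq_one_iff, neg_eq_zero]⟩
  exact hasDerivAt_of_eventually_sub_eq_mul (by simpa only [hfixed] using hreturn)
    (tendsto_integral_secantCoeff hfC huSol hyNear).neg.rexp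

/-- **Proposition 2.3, case k = 1** (return map). Let `u` be a periodic
solution of `u' + f(t,u) = v`, let `J = (p,q)` be an open interval containing
`u 0` such that for each `c ∈ J` the solution `y c` of the initial value
problem `y' + f(t,y) = v`, `y 0 = c` is defined on `[0,1]`, and let
`ρ c = y c 1` be the return map. Then `ρ (u 0) = u 0`, `ρ` is differentiable
at `u 0` with derivative `exp (−∫₀¹ D₂f(t,u t) dt) > 0`, and this derivative
equals 1 exactly when `∫₀¹ D₂f(t,u t) dt = 0`, i.e. when `u` is a critical
point of `F(u) = u' + f(t,u)`. -/
theorem stmt7 (f : ℝ → ℝ → ℝ) (hf : Nonlinearity f)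
    (v : ℝ → ℝ) (hv : Continuous v) (hvper : Periodic1 v)
    (u : ℝ → ℝ) (hu : ContDiff ℝ 1 u) (huper : Periodic1 u)
    (husol : ∀ t, deriv u t + f t (u t) = v t)
    (p q : ℝ) (hpq : u 0 ∈ Set.Ioo p q)
    (y : ℝ → ℝ → ℝ)
    (hy : ∀ c ∈ Set.Ioo p q, y c 0 = c ∧
      ∀ t ∈ Set.Icc (0:ℝ) 1, HasDerivAt (y c) (v t - f t (y c t)) t)
    (ρ : ℝ → ℝ) (hρ : ∀ c, ρ c = y c 1) :
    ρ (u 0) = u 0 ∧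
    HasDerivAt ρ (Real.exp (-(∫ t in (0:ℝ)..1, deriv (f t) (u t)))) (u 0) ∧
    0 < Real.exp (-(∫ t in (0:ℝ)..1, deriv (f t) (u t))) ∧
    (Real.exp (-(∫ t in (0:ℝ)..1, deriv (f t) (u t))) = 1 ↔
      (∫ t in (0:ℝ)..1, deriv (f t) (u t)) = 0) :=
  stmt7_general f hf v u hu huper husol p q hpq y hy ρ hρ
end

section
/- Let h : [0,1] → ℝ be continuously differentiable. Then there exists a unique real number A with A > max_{t∈[0,1]} h(t) such that ∫₀¹ dt / (A − h(t)) = 1. Moreover, the map A ↦ ∫₀¹ dt / (A − h(t)) is strictly decreasing on (max h, ∞), tends to 0 as A → ∞, and tends to +∞ as A decreases to max h. -/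
/-!
Write `ε = A - max h`. A `C¹` function is `K`-Lipschitz on `[0, 1]`, so near a maximum point `t₀`
we have `A - h t ≤ ε + L |t - t₀|`, and the integral is bounded below by
`∫ (ε + L |t - t₀|)⁻¹ dt`, which grows like `L⁻¹ log (1 / ε)` as `ε ↓ 0`. For large `A` it is at
most `1 / (A - max h)`. Being continuous and strictly decreasing in `A`, it takes the value `1`
exactly once.
-/

open Filter Topology Set intervalIntegral MeasureTheory

section LogBlowUp

variable {ε L : ℝ}

theorem integral_inv_add_mul_abs (hε : 0 < ε) (hL : 0 < L) {d : ℝ} (hd : 0 ≤ d) :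
    ∫ s in (0:ℝ)..d, (ε + L * |s|)⁻¹ = L⁻¹ * (Real.log (ε + L * d) - Real.log ε) := by
  calc ∫ s in (0:ℝ)..d, (ε + L * |s|)⁻¹ = ∫ s in (0:ℝ)..d, (fun x => x⁻¹) (L * s + ε) := by
        refine integral_congr fun s hs => ?_
        rw [uIcc_of_le hd] at hs
        simp [abs_of_nonneg hs.1, add_comm]
    _ = L⁻¹ * (Real.log (ε + L * d) - Real.log ε) := by
        have hεd : 0 < ε + L * d := by positivity
        rw [integral_comp_mul_add _ hL.ne', mul_zero, zero_add,
          integral_inv (notMem_uIcc_of_lt hε (by linarith)), smul_eq_mul, add_comm,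
          Real.log_div hεd.ne' hε.ne']

theorem tendsto_integral_inv_add_mul_abs (hL : 0 < L) {d : ℝ} (hd : 0 < d) :
    Tendsto (fun ε => ∫ s in (0:ℝ)..d, (ε + L * |s|)⁻¹) (𝓝[>] 0) atTop := by
  have hlog_num : Tendsto (fun ε => Real.log (ε + L * d)) (𝓝[>] 0) (𝓝 (Real.log (0 + L * d))) :=
    (((continuous_add_const _).tendsto 0).log (by positivity)).mono_left nhdsWithin_le_nhds
  have hlog : Tendsto (fun ε => Real.log (ε + L * d) - Real.log ε) (𝓝[>] 0) atTop :=
    (hlog_num.add_atTop (tendsto_neg_atBot_atTop.comp Real.tendsto_log_nhdsGT_zero)).congr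
      fun ε => (sub_eq_add_neg _ _).symm
  refine (hlog.const_mul_atTop (inv_pos.2 hL)).congr' ?_
  filter_upwards [self_mem_nhdsWithin] with ε hε using (integral_inv_add_mul_abs hε hL hd.le).symm

variable {a b t₀ : ℝ}

theorem integral_inv_add_mul_abs_sub (hε : 0 < ε) (hL : 0 ≤ L) :
    ∫ t in a..b, (ε + L * |t - t₀|)⁻¹ =
      (∫ s in (0:ℝ)..(t₀ - a), (ε + L * |s|)⁻¹) + ∫ s in (0:ℝ)..(b - t₀), (ε + L * |s|)⁻¹ := by
  have hint : ∀ u v, IntervalIntegrable (fun t => (ε + L * |t - t₀|)⁻¹) volume u v := fun u v =>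
    (Continuous.inv₀ (by fun_prop) fun t => by positivity).intervalIntegrable u v
  rw [← integral_add_adjacent_intervals (hint a t₀) (hint t₀ b)]
  congr 1
  · simp_rw [abs_sub_comm _ t₀]
    rw [integral_comp_sub_left (fun s => (ε + L * |s|)⁻¹) t₀, sub_self]
  · rw [integral_comp_sub_right (fun s => (ε + L * |s|)⁻¹) t₀, sub_self]

theorem tendsto_integral_inv_add_mul_abs_sub (hL : 0 < L) (hab : a < b) (ht₀ : t₀ ∈ Icc a b) :
    Tendsto (fun ε => ∫ t in a..b, (ε + L * |t - t₀|)⁻¹) (𝓝[>] 0) atTop := by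
  have hnonneg : ∀ d, 0 ≤ d → 0 ≤ᶠ[𝓝[>] 0] fun ε => ∫ s in (0:ℝ)..d, (ε + L * |s|)⁻¹ := by
    intro d hd
    filter_upwards [self_mem_nhdsWithin] with ε (hε : 0 < ε)
    exact integral_nonneg hd fun s _ => by positivity
  refine Tendsto.congr' ?_ (show Tendsto (fun ε => (∫ s in (0:ℝ)..(t₀ - a), (ε + L * |s|)⁻¹)
      + ∫ s in (0:ℝ)..(b - t₀), (ε + L * |s|)⁻¹) (𝓝[>] 0) atTop from ?_)
  · filter_upwards [self_mem_nhdsWithin] with ε hε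
    exact (integral_inv_add_mul_abs_sub hε hL.le).symm
  rcases ht₀.1.lt_or_eq with ha | rfl
  · exact (tendsto_integral_inv_add_mul_abs hL (sub_pos.2 ha)).atTop_add_zero_eventuallyLE
      (hnonneg _ (sub_nonneg.2 ht₀.2))
  · exact Tendsto.zero_eventuallyLE_add_atTop (hnonneg _ (sub_self a).ge)
      (tendsto_integral_inv_add_mul_abs hL (sub_pos.2 hab))

end LogBlowUp

section IntegralOneDivSub

variable {h : ℝ → ℝ} {a b M : ℝ}

theorem continuousOn_one_div_sub (hh : ContinuousOn h (Icc a b)) (hM : ∀ t ∈ Icc a b, h t ≤ M)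
    {A : ℝ} (hA : M < A) : ContinuousOn (fun t => 1 / (A - h t)) (Icc a b) :=
  continuousOn_const.div (continuousOn_const.sub hh) fun t ht =>
    (sub_pos.2 ((hM t ht).trans_lt hA)).ne'

theorem strictAntiOn_integral_one_div_sub (hab : a < b) (hh : ContinuousOn h (Icc a b))
    (hM : ∀ t ∈ Icc a b, h t ≤ M) :
    StrictAntiOn (fun A => ∫ t in a..b, 1 / (A - h t)) (Ioi M) := by
  intro A (hA : M < A) B (hB : M < B) hAB
  have hpos : ∀ t ∈ Icc a b, 0 < A - h t := fun t ht => sub_pos.2 ((hM t ht).trans_lt hA)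
  have ha : a ∈ Icc a b := left_mem_Icc.2 hab.le
  refine integral_lt_integral_of_continuousOn_of_le_of_exists_lt hab
    (continuousOn_one_div_sub hh hM hB) (continuousOn_one_div_sub hh hM hA)
    (fun t ht => one_div_le_one_div_of_le (hpos t (Ioc_subset_Icc_self ht)) (by linarith))
    ⟨a, ha, one_div_lt_one_div_of_lt (hpos a ha) (by linarith)⟩

theorem continuousOn_integral_one_div_sub (hab : a ≤ b) (hh : ContinuousOn h (Icc a b))
    (hM : ∀ t ∈ Icc a b, h t ≤ M) :
    ContinuousOn (fun A => ∫ t in a..b, 1 / (A - h t)) (Ioi M) := by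
  intro A₀ (hA₀ : M < A₀)
  refine ContinuousAt.continuousWithinAt ?_
  obtain ⟨A', hMA', hA'A₀⟩ := exists_between hA₀
  have hsub : uIoc a b ⊆ Icc a b := by rw [uIoc_of_le hab]; exact Ioc_subset_Icc_self
  have hbound : ∀ A, A' < A → ∀ t ∈ Icc a b, ‖1 / (A - h t)‖ ≤ (A' - M)⁻¹ := by
    intro A hA t ht
    have hgap : A' - M ≤ A - h t := by linarith [hM t ht]
    rw [Real.norm_eq_abs, abs_of_pos (one_div_pos.2 ((sub_pos.2 hMA').trans_le hgap)), one_div]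
    exact inv_anti₀ (sub_pos.2 hMA') hgap
  refine continuousAt_of_dominated_interval (bound := fun _ => (A' - M)⁻¹) ?_ ?_
    intervalIntegrable_const ?_
  · filter_upwards [eventually_gt_nhds hA'A₀] with A hA
    exact ((continuousOn_one_div_sub hh hM (hMA'.trans hA)).mono hsub).aestronglyMeasurable
      measurableSet_uIoc
  · filter_upwards [eventually_gt_nhds hA'A₀] with A hA
    exact Eventually.of_forall fun t ht => hbound A hA t (hsub ht)
  · exact Eventually.of_forall fun t ht => continuousAt_const.div
      (continuousAt_id.sub continuousAt_const) (sub_pos.2 ((hM t (hsub ht)).trans_lt hA₀)).ne'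

theorem tendsto_integral_one_div_sub_atTop (hab : a ≤ b) (hh : ContinuousOn h (Icc a b))
    (hM : ∀ t ∈ Icc a b, h t ≤ M) :
    Tendsto (fun A => ∫ t in a..b, 1 / (A - h t)) atTop (𝓝 0) := by
  have hbound : ∀ A, M < A → ∫ t in a..b, 1 / (A - h t) ≤ (b - a) * (A - M)⁻¹ := by
    intro A hA
    calc ∫ t in a..b, 1 / (A - h t) ≤ ∫ _ in a..b, (A - M)⁻¹ := by
          refine integral_mono_on hab
            ((continuousOn_one_div_sub hh hM hA).intervalIntegrable_of_Icc hab)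
            intervalIntegrable_const fun t ht => ?_
          rw [one_div]
          exact inv_anti₀ (sub_pos.2 hA) (by linarith [hM t ht])
      _ = (b - a) * (A - M)⁻¹ := by rw [intervalIntegral.integral_const, smul_eq_mul]
  have hmajorant : Tendsto (fun A => (b - a) * (A - M)⁻¹) atTop (𝓝 0) := by
    have hgap : Tendsto (fun A => A - M) atTop atTop :=
      tendsto_atTop_add_const_right _ (-M) tendsto_id
    simpa only [mul_zero, Pi.inv_apply] using tendsto_const_nhds.mul hgap.inv_tendsto_atTop
  refine squeeze_zero' ?_ ?_ hmajorant
  · filter_upwards [eventually_gt_atTop M] with A hA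
    exact integral_nonneg hab fun t ht => one_div_nonneg.2 (sub_nonneg.2 ((hM t ht).trans hA.le))
  · filter_upwards [eventually_gt_atTop M] with A hA using hbound A hA

theorem tendsto_integral_one_div_sub_nhdsGT {K : NNReal} {t₀ : ℝ} (hab : a < b)
    (hlip : LipschitzOnWith K h (Icc a b)) (ht₀ : t₀ ∈ Icc a b) (hmax : IsMaxOn h (Icc a b) t₀) :
    Tendsto (fun A => ∫ t in a..b, 1 / (A - h t)) (𝓝[>] (h t₀)) atTop := by
  -- `K + 1` rather than `K`: the logarithmic comparison integral needs a positive slope.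
  set L : ℝ := K + 1
  have hL : 0 < L := by positivity
  have hle : ∀ A, h t₀ < A → ∫ t in a..b, ((A - h t₀) + L * |t - t₀|)⁻¹ ≤
      ∫ t in a..b, 1 / (A - h t) := by
    intro A hA
    refine integral_mono_on hab.le ?_
      ((continuousOn_one_div_sub hlip.continuousOn hmax hA).intervalIntegrable_of_Icc hab.le)
      fun t ht => ?_
    · have hε : 0 < A - h t₀ := sub_pos.2 hA
      exact (Continuous.inv₀ (by fun_prop) fun t => by positivity).intervalIntegrable a b
    · have hdist : h t₀ - h t ≤ L * |t - t₀| :=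
        calc h t₀ - h t ≤ |h t₀ - h t| := le_abs_self _
          _ ≤ K * |t₀ - t| := by simpa only [Real.dist_eq] using hlip.dist_le_mul t₀ ht₀ t ht
          _ ≤ L * |t - t₀| := by
            rw [abs_sub_comm]; gcongr; exact le_add_of_nonneg_right zero_le_one
      rw [one_div]
      exact inv_anti₀ (sub_pos.2 ((hmax ht).trans_lt hA)) (by linarith)
  have hshift : Tendsto (fun A => A - h t₀) (𝓝[>] (h t₀)) (𝓝[>] 0) := by
    have := (map_subRight_nhdsGT (c := h t₀) (a := h t₀)).le
    rwa [sub_self] at this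
  refine tendsto_atTop_mono' _ ?_
    ((tendsto_integral_inv_add_mul_abs_sub hL hab ht₀).comp hshift)
  filter_upwards [self_mem_nhdsWithin] with A hA using hle A hA

end IntegralOneDivSub

theorem StrictAntiOn.existsUnique_eq_of_tendsto {F : ℝ → ℝ} {M l c : ℝ}
    (hanti : StrictAntiOn F (Ioi M)) (hcont : ContinuousOn F (Ioi M))
    (htop : Tendsto F atTop (𝓝 l)) (hbot : Tendsto F (𝓝[>] M) atTop) (hc : l < c) :
    ∃! A, M < A ∧ F A = c := by
  obtain ⟨A₁, hA₁c, hA₁M : M < A₁⟩ := ((hbot.eventually_gt_atTop c).and self_mem_nhdsWithin).exists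
  obtain ⟨A₂, hA₂c, hA₁A₂⟩ :=
    ((htop.eventually (gt_mem_nhds hc)).and (eventually_gt_atTop A₁)).exists
  obtain ⟨A, hA, hFA⟩ := intermediate_value_Icc' hA₁A₂.le
    (hcont.mono fun x hx => hA₁M.trans_le hx.1) ⟨hA₂c.le, hA₁c.le⟩
  have hMA : M < A := hA₁M.trans_le hA.1
  exact ⟨A, ⟨hMA, hFA⟩, fun B ⟨hMB, hFB⟩ => hanti.injOn hMB hMA (hFB.trans hFA.symm)⟩

/-- **Key analytic claim in Lemma 3.1**. For `h : [0,1] → ℝ` continuously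
differentiable and `M = max_{[0,1]} h`, there is a unique `A > M` with
`∫₀¹ dt/(A − h t) = 1`; moreover `A ↦ ∫₀¹ dt/(A − h t)` is strictly
decreasing on `(M,∞)`, tends to `0` at `+∞` and to `+∞` as `A ↓ M`. -/
theorem stmt8 (h : ℝ → ℝ) (hh : ContDiffOn ℝ 1 h (Set.Icc 0 1))
    (M : ℝ) (hM : M = sSup (h '' Set.Icc (0:ℝ) 1)) :
    (∃! A : ℝ, M < A ∧ (∫ t in (0:ℝ)..1, 1 / (A - h t)) = 1) ∧
    StrictAntiOn (fun A : ℝ => ∫ t in (0:ℝ)..1, 1 / (A - h t)) (Set.Ioi M) ∧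
    Tendsto (fun A : ℝ => ∫ t in (0:ℝ)..1, 1 / (A - h t)) atTop (𝓝 0) ∧
    Tendsto (fun A : ℝ => ∫ t in (0:ℝ)..1, 1 / (A - h t))
      (𝓝[>] M) atTop := by
  obtain ⟨K, hlip⟩ := hh.exists_lipschitzOnWith one_ne_zero (convex_Icc 0 1) isCompact_Icc
  have hcont := hlip.continuousOn
  obtain ⟨⟨t₀, ht₀, hMt₀⟩, hMmax⟩ :=
    hM ▸ (isCompact_Icc.image_of_continuousOn hcont).isGreatest_sSup
      ((nonempty_Icc.2 zero_le_one).image h)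
  have hle : ∀ t ∈ Icc (0:ℝ) 1, h t ≤ M := fun t ht => hMmax (mem_image_of_mem h ht)
  have hmax : IsMaxOn h (Icc 0 1) t₀ := fun t ht => hMt₀ ▸ hle t ht
  have hanti := strictAntiOn_integral_one_div_sub zero_lt_one hcont hle
  have htop := tendsto_integral_one_div_sub_atTop zero_le_one hcont hle
  have hbot := hMt₀ ▸ tendsto_integral_one_div_sub_nhdsGT zero_lt_one hlip ht₀ hmax
  exact ⟨hanti.existsUnique_eq_of_tendsto
    (continuousOn_integral_one_div_sub zero_le_one hcont hle) htop hbot one_pos, hanti, htop, hbot⟩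
end

section
/- Let k ≥ 1 and let f : ℝ → ℝ be a smooth k-good function. Then there exists a continuously differentiable 1-periodic u : ℝ → ℝ with ∫₀¹ f^{(i)}(u(t)) dt = 0 for every i = 1, …, k if and only if 0 ∈ ℝ^k lies in the interior of the convex hull of the image of γ̂_k. -/
/-- `γ̂_k(x) = (f'(x), f''(x), …, f^{(k)}(x)) ∈ ℝ^k`. -/
noncomputable def gammaHat (f : ℝ → ℝ) (k : ℕ) (x : ℝ) : Fin k → ℝ :=
  fun i => iteratedDeriv (i.1 + 1) f x

/-- `f` is `k`-good if `γ̂_k` never vanishes and the image of every nonempty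
open interval under `γ̂_k` is not contained in a hyperplane of `ℝ^k` through
the origin (i.e. in the kernel of a nonzero linear functional). -/
def KGood (f : ℝ → ℝ) (k : ℕ) : Prop :=
  (∀ x, gammaHat f k x ≠ 0) ∧
  ∀ a b : ℝ, a < b → ∀ φ : (Fin k → ℝ) →ₗ[ℝ] ℝ, φ ≠ 0 →
    ¬ (gammaHat f k '' Set.Ioo a b ⊆ {y | φ y = 0})

/-!
If `0` is not interior to the convex hull of the image of `γ̂ = gammaHat f k`, some functional
`φ ≠ 0` is `≤ 0` on that image. As `∫₀¹ φ (γ̂ (u t)) dt = 0`, `φ ∘ γ̂` vanishes on the range of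
`u`, which is either a nondegenerate interval (excluded by goodness) or a point `x` with
`γ̂ x = ∫₀¹ γ̂ (u t) dt = 0`.

Conversely, `0` is already interior to the convex hull of finitely many values `γ̂ (Z i)`. A
smooth 1-periodic loop resting at `Z i` for time `s i` and moving between consecutive points in
time `δ` has `∫₀¹ γ̂ (u t) dt = ∑ i, s i • γ̂ (Z i) + δ • C` with `C` independent of `s`. For small
`δ` the point `-δ • C / ∑ i, s i` lies in the convex hull of the `γ̂ (Z i)`, and its barycentric
coordinates give the `s i`.
-/

open Set Filter Topology MeasureTheory

section ConvexHull

theorem exists_mem_stdSimplex_sum_smul_eq {E ι : Type*} [AddCommGroup E] [Module ℝ E]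
    [Fintype ι] {v : ι → E} {x : E} (hx : x ∈ convexHull ℝ (range v)) :
    ∃ w ∈ stdSimplex ℝ ι, ∑ i, w i • v i = x := by
  classical
  have hv : range v = Fintype.linearCombination ℝ v '' range fun i => Pi.single i 1 := by
    rw [← range_comp]
    congr 1
    funext i
    simp [Fintype.linearCombination_apply_single]
  rw [hv, ← LinearMap.image_convexHull, convexHull_rangle_single_eq_stdSimplex] at hx
  obtain ⟨w, hw, rfl⟩ := hx
  exact ⟨w, hw, (Fintype.linearCombination_apply ℝ v w).symm⟩

theorem exists_pos_sum_smul_add_smul_eq_zero {E ι : Type*} [AddCommGroup E] [Module ℝ E]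
    [TopologicalSpace E] [ContinuousSMul ℝ E] [Fintype ι] {z : ι → E}
    (h0 : (0 : E) ∈ interior (convexHull ℝ (range z))) (C : E) {a : ℝ} (ha : 0 ≤ a) :
    ∃ δ > 0, ∃ w : ι → ℝ, (∀ i, 0 ≤ w i) ∧ ∑ i, w i + a * δ = 1 ∧
      ∑ i, w i • z i + δ • C = 0 := by
  have hlim : Tendsto (fun ε : ℝ => -ε • C) (𝓝[>] 0) (𝓝 0) := by
    have hcont : Continuous fun ε : ℝ => -ε • C := continuous_neg.smul continuous_const
    simpa using (hcont.tendsto 0).mono_left nhdsWithin_le_nhds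
  obtain ⟨ε, hεC, hε⟩ :=
    ((hlim.eventually (mem_interior_iff_mem_nhds.1 h0)).and self_mem_nhdsWithin).exists
  obtain ⟨w, ⟨hw0, hw1⟩, hwz⟩ := exists_mem_stdSimplex_sum_smul_eq hεC
  have hε : 0 < ε := hε
  have hd : 0 < 1 + a * ε := by positivity
  refine ⟨ε / (1 + a * ε), by positivity, fun i => w i / (1 + a * ε),
    fun i => div_nonneg (hw0 i) hd.le, ?_, ?_⟩
  · rw [← Finset.sum_div, hw1]
    field_simp
  · simp_rw [div_eq_inv_mul, mul_smul, ← Finset.smul_sum, hwz]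
    module

theorem exists_ne_zero_forall_eq_of_affineSpan_ne_top {K V : Type*} [Field K] [AddCommGroup V]
    [Module K V] {s : Set V} (hs : affineSpan K s ≠ ⊤) {x₀ : V} (hx₀ : x₀ ∈ s) :
    ∃ φ : V →ₗ[K] K, φ ≠ 0 ∧ ∀ x ∈ s, φ x = φ x₀ := by
  have hlt : vectorSpan K s < ⊤ := by
    rw [lt_top_iff_ne_top]
    contrapose! hs
    exact (AffineSubspace.affineSpan_eq_top_iff_vectorSpan_eq_top_of_nonempty K V V
      ⟨x₀, hx₀⟩).2 hs
  obtain ⟨φ, hφ, hker⟩ := (vectorSpan K s).exists_le_ker_of_lt_top hlt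
  refine ⟨φ, hφ, fun x hx => ?_⟩
  have := hker (vsub_mem_vectorSpan K hx hx₀)
  rwa [LinearMap.mem_ker, vsub_eq_sub, map_sub, sub_eq_zero] at this

variable {E : Type*} [NormedAddCommGroup E] [NormedSpace ℝ E] [FiniteDimensional ℝ E]

theorem exists_ne_zero_forall_nonpos_of_zero_notMem_interior_convexHull {s : Set E}
    (hs : s.Nonempty) (h0 : (0 : E) ∉ interior (convexHull ℝ s)) :
    ∃ φ : E →ₗ[ℝ] ℝ, φ ≠ 0 ∧ ∀ x ∈ s, φ x ≤ 0 := by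
  by_cases hint : (interior (convexHull ℝ s)).Nonempty
  · obtain ⟨φ, hφ, hle⟩ :=
      geometric_hahn_banach_of_nonempty_interior_point (convex_convexHull ℝ s) h0 hint
    refine ⟨φ, fun h => hφ (ContinuousLinearMap.coe_injective h), fun x hx => ?_⟩
    simpa using hle x (subset_convexHull ℝ s hx)
  · obtain ⟨x₀, hx₀⟩ := hs
    rw [interior_convexHull_nonempty_iff_affineSpan_eq_top] at hint
    obtain ⟨φ, hφ, hconst⟩ := exists_ne_zero_forall_eq_of_affineSpan_ne_top hint hx₀
    rcases le_total (φ x₀) 0 with hneg | hpos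
    · exact ⟨φ, hφ, fun x hx => (hconst x hx).trans_le hneg⟩
    · exact ⟨-φ, neg_ne_zero.2 hφ, fun x hx => by simp [hconst x hx, hpos]⟩

theorem exists_finset_subset_mem_interior_convexHull {s : Set E} {x : E}
    (hx : x ∈ interior (convexHull ℝ s)) :
    ∃ t : Finset E, ↑t ⊆ s ∧ x ∈ interior (convexHull ℝ (t : Set E)) := by
  classical
  obtain ⟨b, hxb, hbs⟩ :=
    exists_mem_interior_convexHull_affineBasis (mem_interior_iff_mem_nhds.1 hx)
  have hfin : ∀ i, ∃ t : Finset E, ↑t ⊆ s ∧ b i ∈ convexHull ℝ (t : Set E) := fun i => by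
    simpa [convexHull_eq_union_convexHull_finite_subsets s] using
      hbs (subset_convexHull ℝ _ ⟨i, rfl⟩)
  choose t hts hbt using hfin
  refine ⟨Finset.univ.biUnion t, by simpa using hts, interior_mono ?_ hxb⟩
  refine convexHull_min ?_ (convex_convexHull ℝ _)
  rintro _ ⟨i, rfl⟩
  exact convexHull_mono (by simpa using subset_iUnion (fun j => (t j : Set E)) i) (hbt i)

theorem exists_fin_mem_interior_convexHull_range {α : Type*} {g : α → E} {x : E}
    (hx : x ∈ interior (convexHull ℝ (range g))) :
    ∃ (m : ℕ) (Z : Fin m → α), x ∈ interior (convexHull ℝ (range (g ∘ Z))) := by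
  obtain ⟨t, hts, hxt⟩ := exists_finset_subset_mem_interior_convexHull hx
  choose Z hZ using fun p : Fin t.card => hts (t.equivFin.symm p).2
  have hrange : range (g ∘ Z) = t := by
    rw [show g ∘ Z = ((↑) : t → E) ∘ t.equivFin.symm from funext hZ,
      t.equivFin.symm.surjective.range_comp, Subtype.range_coe]
  exact ⟨t.card, Z, hrange ▸ hxt⟩

end ConvexHull

section IntervalIntegral

variable {F : Type*} [NormedAddCommGroup F] [NormedSpace ℝ F]

theorem contDiff_comp_fract {v : ℝ → F} {n : WithTop ℕ∞} (hv : ContDiff ℝ n v)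
    (hv1 : ∀ᶠ t in 𝓝 0, v (t + 1) = v t) : ContDiff ℝ n (v ∘ Int.fract) := by
  rw [contDiff_iff_contDiffAt]
  intro x
  refine ((hv.comp (contDiff_id.sub contDiff_const)).contDiffAt (x := x)).congr_of_eventuallyEq
    (f := fun t => v (t - ⌊x⌋)) ?_
  -- `v ∘ fract = v (· - ⌊x⌋)` near `x`: on the right of `⌊x⌋` by definition of `fract`, on its
  -- left (relevant only when `x` is an integer) by `hv1`.
  have hleft : ∀ᶠ t in 𝓝 x, t < (⌊x⌋ : ℝ) → v (t - ⌊x⌋ + 1) = v (t - ⌊x⌋) := by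
    rcases (Int.fract_nonneg x).eq_or_lt with hx | hx
    · have hshift : Tendsto (fun t => t - (⌊x⌋ : ℝ)) (𝓝 x) (𝓝 0) := by
        have := (continuous_sub_right (⌊x⌋ : ℝ)).tendsto x
        rwa [← Int.fract, ← hx] at this
      exact (hshift.eventually hv1).mono fun t ht _ => ht
    · have : (⌊x⌋ : ℝ) < x := by linarith [Int.self_sub_floor x]
      filter_upwards [Ioi_mem_nhds this] with t ht hlt
      exact absurd ht (not_lt.2 hlt.le)
  have hnear : Ioo ((⌊x⌋ : ℝ) - 1) (⌊x⌋ + 1) ∈ 𝓝 x :=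
    Ioo_mem_nhds (by linarith [Int.floor_le x]) (Int.lt_floor_add_one x)
  filter_upwards [hleft, hnear] with t hleft ht
  rcases lt_or_ge t ⌊x⌋ with hlt | hle
  · have : Int.fract t = t - ⌊x⌋ + 1 :=
      Int.fract_eq_iff.2 ⟨by linarith [ht.1], by linarith, ⌊x⌋ - 1, by push_cast; ring⟩
    simp only [Function.comp_apply, this, hleft hlt]
  · have : Int.fract t = t - ⌊x⌋ :=
      Int.fract_eq_iff.2 ⟨by linarith, by linarith [ht.2], ⌊x⌋, by ring⟩
    simp only [Function.comp_apply, this]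

theorem intervalIntegral_comp_fract (g : ℝ → F) :
    ∫ t in (0 : ℝ)..1, g (Int.fract t) = ∫ t in (0 : ℝ)..1, g t := by
  simp only [intervalIntegral.integral_of_le zero_le_one, integral_Ioc_eq_integral_Ioo]
  exact setIntegral_congr_fun measurableSet_Ioo fun t ht => by
    rw [Int.fract_eq_self.2 ⟨ht.1.le, ht.2⟩]

theorem intervalIntegral_eq_smul_of_forall_mem_Icc {f : ℝ → F} {a b : ℝ} {c : F}
    [CompleteSpace F] (hab : a ≤ b) (hf : ∀ t ∈ Icc a b, f t = c) :
    ∫ t in a..b, f t = (b - a) • c := by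
  rw [intervalIntegral.integral_congr (g := fun _ => c) (by rwa [uIcc_of_le hab]),
    intervalIntegral.integral_const]

theorem Function.Periodic.eq_zero_of_nonneg_of_intervalIntegral_eq_zero {g : ℝ → ℝ}
    (hg : Continuous g) (hper : Function.Periodic g 1) (hnonneg : ∀ t, 0 ≤ g t)
    (hint : ∫ t in (0 : ℝ)..1, g t = 0) (t : ℝ) : g t = 0 := by
  have hae : g =ᵐ[volume.restrict (Icc 0 1)] 0 := by
    rw [Measure.restrict_congr_set Ioc_ae_eq_Icc.symm]
    exact (intervalIntegral.integral_eq_zero_iff_of_le_of_nonneg_ae zero_le_one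
      (ae_of_all _ hnonneg) (hg.intervalIntegrable 0 1)).1 hint
  obtain ⟨y, hy, hgy⟩ := hper.exists_mem_Ico₀ one_pos t
  rw [hgy]
  exact Measure.eqOn_Icc_of_ae_eq volume zero_ne_one hae hg.continuousOn continuousOn_const
    (Ico_subset_Icc_self hy)

end IntervalIntegral

section LoopPath

open Real

noncomputable def plateauStart (δ : ℝ) (s : ℕ → ℝ) (p : ℕ) : ℝ :=
  δ + ∑ q ∈ Finset.range p, (s q + δ)

noncomputable def loopStep (δ : ℝ) (s : ℕ → ℝ) (p : ℕ) (t : ℝ) : ℝ :=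
  smoothTransition ((t - (plateauStart δ s p + s p)) / δ)

/-- `loopPath Y δ s n` rests at `Y p` during `[plateauStart δ s p, plateauStart δ s p + s p]`
and then moves to `Y (p + 1)` within time `δ`, following `loopStep δ s p`. -/
noncomputable def loopPath (Y : ℕ → ℝ) (δ : ℝ) (s : ℕ → ℝ) (n : ℕ) (t : ℝ) : ℝ :=
  Y 0 + ∑ p ∈ Finset.range n, (Y (p + 1) - Y p) * loopStep δ s p t

variable {Y : ℕ → ℝ} {δ : ℝ} {s : ℕ → ℝ} {n p : ℕ} {t : ℝ}

theorem plateauStart_zero : plateauStart δ s 0 = δ := by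
  simp [plateauStart]

theorem plateauStart_succ (p : ℕ) :
    plateauStart δ s (p + 1) = plateauStart δ s p + s p + δ := by
  simp only [plateauStart, Finset.sum_range_succ]
  ring

theorem monotone_plateauStart (hδ : 0 ≤ δ) (hs : ∀ p, 0 ≤ s p) : Monotone (plateauStart δ s) :=
  monotone_nat_of_le_succ fun p => by rw [plateauStart_succ]; linarith [hs p]

theorem loopStep_of_le (hδ : 0 < δ) (ht : t ≤ plateauStart δ s p + s p) :
    loopStep δ s p t = 0 :=
  smoothTransition.zero_of_nonpos (div_nonpos_of_nonpos_of_nonneg (by linarith) hδ.le)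

theorem loopStep_of_ge (hδ : 0 < δ) (ht : plateauStart δ s (p + 1) ≤ t) :
    loopStep δ s p t = 1 := by
  rw [plateauStart_succ] at ht
  exact smoothTransition.one_of_one_le (by rw [le_div_iff₀ hδ]; linarith)

theorem loopPath_of_le (hδ : 0 < δ) (hs : ∀ p, 0 ≤ s p) (ht : t ≤ plateauStart δ s 0) :
    loopPath Y δ s n t = Y 0 := by
  have hstep (p : ℕ) : loopStep δ s p t = 0 := by
    refine loopStep_of_le hδ (ht.trans ?_)
    linarith [monotone_plateauStart hδ.le hs (Nat.zero_le p), hs p]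
  simp [loopPath, hstep]

theorem loopPath_of_ge (hδ : 0 < δ) (hs : ∀ p, 0 ≤ s p) (ht : plateauStart δ s n ≤ t) :
    loopPath Y δ s n t = Y n := by
  have hstep : ∀ p ∈ Finset.range n, (Y (p + 1) - Y p) * loopStep δ s p t = Y (p + 1) - Y p :=
    fun p hp => by
      rw [loopStep_of_ge hδ ((monotone_plateauStart hδ.le hs (Finset.mem_range.1 hp)).trans ht),
        mul_one]
  rw [loopPath, Finset.sum_congr rfl hstep, Finset.sum_range_sub]
  ring

theorem loopPath_of_mem_Icc (hδ : 0 < δ) (hs : ∀ p, 0 ≤ s p) (hp : p < n)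
    (ht : t ∈ Icc (plateauStart δ s p) (plateauStart δ s (p + 1))) :
    loopPath Y δ s n t = Y p + (Y (p + 1) - Y p) * loopStep δ s p t := by
  have hmono := monotone_plateauStart hδ.le hs
  have hbefore : ∀ q ∈ Finset.range p, (Y (q + 1) - Y q) * loopStep δ s q t = Y (q + 1) - Y q :=
    fun q hq => by
      rw [loopStep_of_ge hδ ((hmono (Finset.mem_range.1 hq)).trans ht.1), mul_one]
  have hafter : ∀ q ∈ Finset.Ico (p + 1) n, (Y (q + 1) - Y q) * loopStep δ s q t = 0 :=
    fun q hq => by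
      have := hmono (Finset.mem_Ico.1 hq).1
      rw [loopStep_of_le hδ (by linarith [ht.2, hs q]), mul_zero]
  rw [loopPath, ← Finset.sum_range_add_sum_Ico _ hp, Finset.sum_range_succ,
    Finset.sum_congr rfl hbefore, Finset.sum_range_sub, Finset.sum_eq_zero hafter]
  ring

theorem contDiff_loopPath {m : ℕ∞} : ContDiff ℝ m (loopPath Y δ s n) :=
  contDiff_const.add <| ContDiff.sum fun _ _ => contDiff_const.mul <|
    smoothTransition.contDiff.comp ((contDiff_id.sub contDiff_const).div_const δ)

variable {F : Type*} [NormedAddCommGroup F] [NormedSpace ℝ F] [CompleteSpace F] {h : ℝ → F}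

theorem integral_loopPath_plateauStart_succ (hδ : 0 < δ) (hs : ∀ p, 0 ≤ s p) (hh : Continuous h)
    (hp : p < n) :
    ∫ t in plateauStart δ s p..plateauStart δ s (p + 1), h (loopPath Y δ s n t) =
      s p • h (Y p) + δ • ∫ x in (0 : ℝ)..1, h (Y p + (Y (p + 1) - Y p) * smoothTransition x) := by
  have hint (a b : ℝ) : IntervalIntegrable (fun t => h (loopPath Y δ s n t)) volume a b :=
    (hh.comp (contDiff_loopPath (m := 0)).continuous).intervalIntegrable a b
  set τ := plateauStart δ s p + s p
  have hτ : plateauStart δ s (p + 1) = τ + δ := plateauStart_succ p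
  have hrest : ∫ t in plateauStart δ s p..τ, h (loopPath Y δ s n t) = s p • h (Y p) := by
    rw [intervalIntegral_eq_smul_of_forall_mem_Icc (by linarith [hs p]) (c := h (Y p)),
      add_sub_cancel_left]
    intro t ht
    rw [loopPath_of_mem_Icc hδ hs hp ⟨ht.1, by linarith [ht.2]⟩, loopStep_of_le hδ ht.2,
      mul_zero, add_zero]
  have hmove : ∫ t in τ..τ + δ, h (loopPath Y δ s n t) =
      δ • ∫ x in (0 : ℝ)..1, h (Y p + (Y (p + 1) - Y p) * smoothTransition x) := by
    rw [intervalIntegral.integral_congr (g := fun t =>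
        h (Y p + (Y (p + 1) - Y p) * smoothTransition (t / δ - τ / δ))),
      intervalIntegral.integral_comp_div_sub
        (fun x => h (Y p + (Y (p + 1) - Y p) * smoothTransition x)) hδ.ne',
      sub_self, add_div, div_self hδ.ne', add_sub_cancel_left]
    intro t ht
    rw [uIcc_of_le (by linarith)] at ht
    simp only
    rw [loopPath_of_mem_Icc hδ hs hp ⟨by linarith [ht.1, hs p], hτ ▸ ht.2⟩, loopStep, sub_div]
  rw [← intervalIntegral.integral_add_adjacent_intervals (hint _ τ) (hint _ _), hrest, hτ, hmove]

theorem integral_loopPath (hδ : 0 < δ) (hs : ∀ p, 0 ≤ s p) (hh : Continuous h) :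
    ∫ t in (0 : ℝ)..plateauStart δ s n + δ, h (loopPath Y δ s n t) =
      δ • h (Y 0) + ∑ p ∈ Finset.range n, (s p • h (Y p) +
        δ • ∫ x in (0 : ℝ)..1, h (Y p + (Y (p + 1) - Y p) * smoothTransition x)) +
      δ • h (Y n) := by
  have hint (a b : ℝ) : IntervalIntegrable (fun t => h (loopPath Y δ s n t)) volume a b :=
    (hh.comp (contDiff_loopPath (m := 0)).continuous).intervalIntegrable a b
  have hstart : 0 ≤ plateauStart δ s 0 := plateauStart_zero (s := s) ▸ hδ.le
  have hhead : ∫ t in (0 : ℝ)..plateauStart δ s 0, h (loopPath Y δ s n t) = δ • h (Y 0) := by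
    rw [intervalIntegral_eq_smul_of_forall_mem_Icc hstart (c := h (Y 0)), sub_zero,
      plateauStart_zero]
    intro t ht
    rw [loopPath_of_le hδ hs ht.2]
  have htail : ∫ t in plateauStart δ s n..plateauStart δ s n + δ, h (loopPath Y δ s n t) =
      δ • h (Y n) := by
    rw [intervalIntegral_eq_smul_of_forall_mem_Icc (by linarith) (c := h (Y n)),
      add_sub_cancel_left]
    intro t ht
    rw [loopPath_of_ge hδ hs ht.1]
  rw [← intervalIntegral.integral_add_adjacent_intervals (hint 0 (plateauStart δ s n))
      (hint _ _), ← intervalIntegral.integral_add_adjacent_intervals (hint 0 (plateauStart δ s 0))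
      (hint _ _), hhead, htail,
    ← intervalIntegral.sum_integral_adjacent_intervals fun p _ => hint _ _,
    Finset.sum_congr rfl fun p hp =>
      integral_loopPath_plateauStart_succ hδ hs hh (Finset.mem_range.1 hp)]

end LoopPath

section Curves

variable {E : Type*} [NormedAddCommGroup E] [NormedSpace ℝ E] [FiniteDimensional ℝ E]
  {c : ℝ → E}

theorem zero_mem_interior_convexHull_of_intervalIntegral_comp_eq_zero (hc : Continuous c)
    (hc0 : ∀ x, c x ≠ 0)
    (hcspan : ∀ a b : ℝ, a < b → ∀ φ : E →ₗ[ℝ] ℝ, φ ≠ 0 → ¬ c '' Ioo a b ⊆ {y | φ y = 0})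
    {u : ℝ → ℝ} (hu : Continuous u) (hper : Function.Periodic u 1)
    (hint : ∫ t in (0 : ℝ)..1, c (u t) = 0) :
    (0 : E) ∈ interior (convexHull ℝ (range c)) := by
  have := FiniteDimensional.complete ℝ E
  by_contra h0
  obtain ⟨φ, hφ, hle⟩ :=
    exists_ne_zero_forall_nonpos_of_zero_notMem_interior_convexHull (range_nonempty c) h0
  have hφu (t : ℝ) : φ (c (u t)) = 0 := by
    have hφint : ∫ t in (0 : ℝ)..1, -φ (c (u t)) = 0 := by
      rw [intervalIntegral.integral_neg, neg_eq_zero]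
      exact (φ.toContinuousLinearMap.intervalIntegral_comp_comm
        ((hc.comp hu).intervalIntegrable 0 1)).trans (by simp [hint])
    have := Function.Periodic.eq_zero_of_nonneg_of_intervalIntegral_eq_zero
      (φ.continuous_of_finiteDimensional.comp (hc.comp hu)).neg
      (fun t => congrArg (fun x => -φ (c x)) (hper t))
      (fun t => neg_nonneg.2 (hle _ (mem_range_self _))) hφint t
    simpa using this
  by_cases hconst : ∀ t, u t = u 0
  · apply hc0 (u 0)
    simpa [hconst] using hint
  obtain ⟨t, ht⟩ := not_forall.1 hconst
  have hnot : ∀ a b, a < b → a ∈ range u → b ∈ range u → False := fun a b hab ha hb =>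
    hcspan a b hab φ hφ <| by
      rintro _ ⟨x, hx, rfl⟩
      obtain ⟨t, rfl⟩ := (isPreconnected_range hu).Icc_subset ha hb (Ioo_subset_Icc_self hx)
      exact hφu t
  rcases Ne.lt_or_gt ht with h | h
  · exact hnot _ _ h ⟨t, rfl⟩ ⟨0, rfl⟩
  · exact hnot _ _ h ⟨0, rfl⟩ ⟨t, rfl⟩

theorem exists_contDiff_periodic_intervalIntegral_comp_eq_zero (hc : Continuous c)
    (h0 : (0 : E) ∈ interior (convexHull ℝ (range c))) :
    ∃ u : ℝ → ℝ, ContDiff ℝ (⊤ : ℕ∞) u ∧ Function.Periodic u 1 ∧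
      ∫ t in (0 : ℝ)..1, c (u t) = 0 := by
  have := FiniteDimensional.complete ℝ E
  obtain ⟨m, Z, hZ⟩ := exists_fin_mem_interior_convexHull_range h0
  have : NeZero m := ⟨by rintro rfl; simp [range_comp] at hZ⟩
  set Y : ℕ → ℝ := fun p => Z (Fin.ofNat m p)
  -- the part of `∫ c ∘ loopPath` that does not depend on the resting times (`integral_loopPath`)
  set C : E := c (Y 0) + ∑ p ∈ Finset.range m,
    (∫ x in (0 : ℝ)..1, c (Y p + (Y (p + 1) - Y p) * Real.smoothTransition x)) + c (Y m)
  obtain ⟨δ, hδ, w, hw0, hw1, hwC⟩ :=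
    exists_pos_sum_smul_add_smul_eq_zero hZ C (a := m + 2) (by positivity)
  set s : ℕ → ℝ := fun p => w (Fin.ofNat m p)
  have hs (p : ℕ) : 0 ≤ s p := hw0 _
  have hsum_s : ∑ p ∈ Finset.range m, s p = ∑ i, w i := by
    rw [← Fin.sum_univ_eq_sum_range]
    simp [s]
  have hsum_c : ∑ p ∈ Finset.range m, s p • c (Y p) = ∑ i, w i • c (Z i) := by
    rw [← Fin.sum_univ_eq_sum_range (fun p => s p • c (Y p))]
    simp [s, Y]
  have hend : plateauStart δ s m + δ = 1 := by
    rw [plateauStart, Finset.sum_add_distrib, hsum_s, Finset.sum_const,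
      Finset.card_range, nsmul_eq_mul, ← hw1]
    ring
  refine ⟨loopPath Y δ s m ∘ Int.fract, contDiff_comp_fract contDiff_loopPath ?_,
    (Int.fract_periodic ℝ).comp _, ?_⟩
  · filter_upwards [Ioo_mem_nhds (neg_lt_zero.2 hδ) hδ] with t ht
    rw [loopPath_of_ge hδ hs (by linarith [ht.1]),
      loopPath_of_le hδ hs (by rw [plateauStart_zero]; exact ht.2.le)]
    simp [Y]
  · simp only [Function.comp_apply]
    rw [intervalIntegral_comp_fract (fun x => c (loopPath Y δ s m x)), ← hend,
      integral_loopPath hδ hs hc, ← hwC, Finset.sum_add_distrib, ← Finset.smul_sum,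
      hsum_c]
    simp only [C, Function.comp_apply]
    module

end Curves

theorem continuous_gammaHat {f : ℝ → ℝ} (hf : ContDiff ℝ (⊤ : ℕ∞) f) (k : ℕ) :
    Continuous (gammaHat f k) :=
  continuous_pi fun _ => hf.continuous_iteratedDeriv _ (by exact_mod_cast le_top)

theorem intervalIntegral_gammaHat_comp_eq_zero_iff {f : ℝ → ℝ} (hf : ContDiff ℝ (⊤ : ℕ∞) f)
    {k : ℕ} {u : ℝ → ℝ} (hu : Continuous u) :
    ∫ t in (0 : ℝ)..1, gammaHat f k (u t) = 0 ↔
      ∀ i : ℕ, 1 ≤ i → i ≤ k → ∫ t in (0 : ℝ)..1, iteratedDeriv i f (u t) = 0 := by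
  have happly (j : Fin k) : (∫ t in (0 : ℝ)..1, gammaHat f k (u t)) j =
      ∫ t in (0 : ℝ)..1, iteratedDeriv (j + 1) f (u t) :=
    ((ContinuousLinearMap.proj (R := ℝ) (φ := fun _ : Fin k => ℝ) j).intervalIntegral_comp_comm
      (f := fun t => gammaHat f k (u t))
      (((continuous_gammaHat hf k).comp hu).intervalIntegrable 0 1)).symm
  simp only [funext_iff, happly, Pi.zero_apply]
  constructor
  · intro h i hi hik
    simpa [Nat.sub_add_cancel hi] using h ⟨i - 1, by omega⟩
  · intro h j
    exact h _ (by omega) j.2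

theorem stmt9_general (k : ℕ) (f : ℝ → ℝ)
    (hf : ContDiff ℝ (⊤ : ℕ∞) f) (hgood : KGood f k) :
    (∃ u : ℝ → ℝ, ContDiff ℝ 1 u ∧ Periodic1 u ∧
      ∀ i : ℕ, 1 ≤ i → i ≤ k → (∫ t in (0:ℝ)..1, iteratedDeriv i f (u t)) = 0)
    ↔ (0 : Fin k → ℝ) ∈ interior (convexHull ℝ (Set.range (gammaHat f k))) := by
  constructor
  · rintro ⟨u, hu, hper, hint⟩
    exact zero_mem_interior_convexHull_of_intervalIntegral_comp_eq_zero
      (continuous_gammaHat hf k) hgood.1 hgood.2 hu.continuous hper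
      ((intervalIntegral_gammaHat_comp_eq_zero_iff hf hu.continuous).2 hint)
  · intro h0
    obtain ⟨u, hu, hper, hint⟩ :=
      exists_contDiff_periodic_intervalIntegral_comp_eq_zero (continuous_gammaHat hf k) h0
    exact ⟨u, hu.of_le (by exact_mod_cast le_top), hper,
      (intervalIntegral_gammaHat_comp_eq_zero_iff hf hu.continuous).1 hint⟩

/-- **Lemma 3.5, first assertion**. For a `k`-good smooth `f`, there is a `C¹`
1-periodic `u` with `∫₀¹ f^{(i)}(u t) dt = 0` for `i = 1,…,k` if and only if
`0 ∈ ℝ^k` lies in the interior of the convex hull of the image of `γ̂_k`. -/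
theorem stmt9 (k : ℕ) (hk : 1 ≤ k) (f : ℝ → ℝ)
    (hf : ContDiff ℝ (⊤ : ℕ∞) f) (hgood : KGood f k) :
    (∃ u : ℝ → ℝ, ContDiff ℝ 1 u ∧ Periodic1 u ∧
      ∀ i : ℕ, 1 ≤ i → i ≤ k → (∫ t in (0:ℝ)..1, iteratedDeriv i f (u t)) = 0)
    ↔ (0 : Fin k → ℝ) ∈ interior (convexHull ℝ (Set.range (gammaHat f k))) :=
  stmt9_general k f hf hgood
end

section
/- Let f : ℝ × ℝ → ℝ be a nonlinearity with D₂f(t,x) > 0 for all (t,x). Define, in the extended real numbers, f₊(t) = sup_x f(t,x) = lim_{x→+∞} f(t,x) and f₋(t) = inf_x f(t,x) = lim_{x→−∞} f(t,x), and the extended-real integrals I₊ = ∫₀¹ f₊(t) dt ∈ (−∞, +∞] and I₋ = ∫₀¹ f₋(t) dt ∈ [−∞, +∞). Then for every continuous 1-periodic v : ℝ → ℝ, the equation u' + f(t,u) = v admits a periodic solution if and only if I₋ < ∫₀¹ v(t) dt < I₊, and in that case the periodic solution is unique. -/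
/-- A periodic solution of `u' + f(t,u) = v`. -/
def IsPeriodicSol (f : ℝ → ℝ → ℝ) (v u : ℝ → ℝ) : Prop :=
  ContDiff ℝ 1 u ∧ Periodic1 u ∧ ∀ t, deriv u t + f t (u t) = v t

open Set Filter Topology Metric intervalIntegral
open scoped NNReal

theorem comp_fract_eq_of_mem_Icc {w : ℝ → ℝ} (hw : w 1 = w 0) {n : ℤ} {s : ℝ}
    (hs : s ∈ Icc (n : ℝ) (n + 1)) : w (Int.fract s) = w (s - n) := by
  rcases hs.2.lt_or_eq with h | rfl
  · rw [Int.fract, Int.floor_eq_iff.2 ⟨hs.1, h⟩]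
  · simp [hw]

theorem hasDerivWithinAt_comp_fract_Icc {w g : ℝ → ℝ} (hg : Function.Periodic g 1)
    (hw : ∀ t ∈ Icc (0 : ℝ) 1, HasDerivWithinAt w (g t) (Icc 0 1) t) (hw1 : w 1 = w 0)
    {n : ℤ} {t : ℝ} (ht : t ∈ Icc (n : ℝ) (n + 1)) :
    HasDerivWithinAt (fun s => w (Int.fract s)) (g t) (Icc (n : ℝ) (n + 1)) t := by
  have hmaps : MapsTo (· - (n : ℝ)) (Icc (n : ℝ) (n + 1)) (Icc 0 1) := fun s hs =>
    ⟨sub_nonneg.2 hs.1, sub_le_iff_le_add'.2 hs.2⟩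
  have hshift := (hw _ (hmaps ht)).comp t ((hasDerivAt_id t).sub_const (n : ℝ)).hasDerivWithinAt
    hmaps
  rw [mul_one, show g (t - n) = g t by simpa using hg.sub_int_mul_eq n] at hshift
  exact hshift.congr (fun s hs => comp_fract_eq_of_mem_Icc hw1 hs) (comp_fract_eq_of_mem_Icc hw1 ht)

theorem hasDerivAt_comp_fract {w g : ℝ → ℝ} (hg : Function.Periodic g 1)
    (hw : ∀ t ∈ Icc (0 : ℝ) 1, HasDerivWithinAt w (g t) (Icc 0 1) t) (hw1 : w 1 = w 0) (t : ℝ) :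
    HasDerivAt (fun s => w (Int.fract s)) (g t) t := by
  have hceil := Int.ceil_lt_add_one t
  have hfloor := Int.lt_floor_add_one t
  have hleft := hasDerivWithinAt_comp_fract_Icc hg hw hw1 (n := ⌈t⌉ - 1) (t := t)
    ⟨by push_cast; linarith, by push_cast; linarith [Int.le_ceil t]⟩
  have hright := hasDerivWithinAt_comp_fract_Icc hg hw hw1 ⟨Int.floor_le t, hfloor.le⟩
  refine (hleft.union hright).hasDerivAt (mem_of_superset
    (Icc_mem_nhds (a := ((⌈t⌉ - 1 : ℤ) : ℝ)) (b := ⌊t⌋ + 1) (by push_cast; linarith) hfloor) ?_)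
  intro s hs
  rcases le_or_gt s ⌈t⌉ with h | h
  · exact Or.inl ⟨hs.1, by push_cast; linarith⟩
  · exact Or.inr ⟨by linarith [(Int.cast_le (R := ℝ)).2 (Int.floor_le_ceil t)], hs.2⟩

theorem exists_periodic_primitive_ge {h : ℝ → ℝ} (hh : Continuous h) (r : ℝ) :
    ∃ β : ℝ → ℝ, (∀ t, HasDerivAt β (h t - ∫ s in (0 : ℝ)..1, h s) t) ∧ β 1 = β 0 ∧
      ∀ t ∈ Icc (0 : ℝ) 1, r ≤ β t := by
  set W : ℝ → ℝ := fun t => ∫ s in (0 : ℝ)..t, (h s - ∫ s in (0 : ℝ)..1, h s)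
  have hW : ∀ t, HasDerivAt W (h t - ∫ s in (0 : ℝ)..1, h s) t := fun t =>
    ((hh.sub continuous_const).integral_hasStrictDerivAt 0 t).hasDerivAt
  obtain ⟨C, hC⟩ := isCompact_Icc.exists_bound_of_continuousOn (s := Icc (0 : ℝ) 1)
    (continuous_iff_continuousAt.2 fun t => (hW t).continuousAt).continuousOn
  refine ⟨fun t => r + C + W t, fun t => (hW t).const_add _, ?_,
    fun t ht => by linarith [neg_abs_le (W t), Real.norm_eq_abs (W t) ▸ hC t ht]⟩
  simp [W, integral_sub (hh.intervalIntegrable 0 1) intervalIntegrable_const]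

theorem exists_periodic_primitive_le {h : ℝ → ℝ} (hh : Continuous h) (r : ℝ) :
    ∃ α : ℝ → ℝ, (∀ t, HasDerivAt α (h t - ∫ s in (0 : ℝ)..1, h s) t) ∧ α 1 = α 0 ∧
      ∀ t ∈ Icc (0 : ℝ) 1, α t ≤ r := by
  obtain ⟨β, hβ, hβ1, hβr⟩ := exists_periodic_primitive_ge hh.neg (-r)
  refine ⟨-β, fun t => ?_, by simp [hβ1], fun t ht => by simpa using neg_le_neg (hβr t ht)⟩
  refine (hβ t).neg.congr_deriv ?_
  simp only [Pi.neg_apply, intervalIntegral.integral_neg]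
  ring

theorem le_of_hasDerivWithinAt_of_lt {G : ℝ → ℝ → ℝ} {w β β' : ℝ → ℝ} {a b : ℝ}
    (hw : ∀ t ∈ Icc a b, HasDerivWithinAt w (G t (w t)) (Icc a b) t)
    (hβ : ∀ t, HasDerivAt β (β' t) t) (hlt : ∀ t ∈ Icc a b, G t (β t) < β' t)
    (ha : w a ≤ β a) : ∀ t ∈ Icc a b, w t ≤ β t :=
  image_le_of_deriv_right_lt_deriv_boundary' (fun t ht => (hw t ht).continuousWithinAt)
    (fun t ht => (hw t (Ico_subset_Icc_self ht)).mono_of_mem_nhdsWithin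
      (Icc_mem_nhdsGE_of_mem ht)) ha
    (fun t _ => (hβ t).continuousAt.continuousWithinAt) (fun t _ => (hβ t).hasDerivWithinAt)
    (fun t ht heq => by rw [heq]; exact hlt t (Ico_subset_Icc_self ht))

theorem le_of_hasDerivWithinAt_of_gt {G : ℝ → ℝ → ℝ} {w α α' : ℝ → ℝ} {a b : ℝ}
    (hw : ∀ t ∈ Icc a b, HasDerivWithinAt w (G t (w t)) (Icc a b) t)
    (hα : ∀ t, HasDerivAt α (α' t) t) (hgt : ∀ t ∈ Icc a b, α' t < G t (α t))
    (ha : α a ≤ w a) : ∀ t ∈ Icc a b, α t ≤ w t := by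
  have := le_of_hasDerivWithinAt_of_lt (G := fun t x => -G t (-x)) (w := -w) (β := -α)
    (fun t ht => by simpa using (hw t ht).neg) (fun t => (hα t).neg)
    (fun t ht => by simpa using hgt t ht) (by simpa using ha)
  exact fun t ht => by simpa using this t ht

theorem LocallyLipschitz.exists_lipschitzWith_projIcc {f : ℝ → ℝ → ℝ}
    (hf : LocallyLipschitz (Function.uncurry f)) {a b m M : ℝ} (hmM : m ≤ M) :
    ∃ K, ∀ t ∈ Icc a b, LipschitzWith K fun x => f t (projIcc m M hmM x) := by
  obtain ⟨K, hK⟩ := hf.locallyLipschitzOn.exists_lipschitzOnWith_of_compact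
    (isCompact_Icc.prod (isCompact_Icc (a := m) (b := M)))
  refine ⟨K, fun t ht => ?_⟩
  have hslice : LipschitzOnWith K (f t) (Icc m M) := by
    have := hK.comp (LipschitzWith.prodMk_left t).lipschitzOnWith fun x hx => mk_mem_prod ht hx
    rwa [mul_one] at this
  have := hslice.to_restrict.comp (LipschitzWith.projIcc hmM)
  rwa [mul_one] at this

theorem exists_flow_of_lipschitzWith {G : ℝ → ℝ → ℝ} {K : ℝ≥0} {L : ℝ}
    (hlip : ∀ t ∈ Icc (0 : ℝ) 1, LipschitzWith K (G t))
    (hcont : ∀ x, ContinuousOn (G · x) (Icc 0 1))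
    (hbdd : ∀ t ∈ Icc (0 : ℝ) 1, ∀ x, |G t x| ≤ L) (R : ℝ≥0) :
    ∃ φ : ℝ → ℝ → ℝ, (∀ a ∈ closedBall (0 : ℝ) R, φ a 0 = a ∧
      ∀ t ∈ Icc (0 : ℝ) 1, HasDerivWithinAt (φ a) (G t (φ a t)) (Icc 0 1) t) ∧
      ContinuousOn (φ · 1) (closedBall 0 R) := by
  have hPL : IsPicardLindelof G (tmin := 0) (tmax := 1) ⟨0, left_mem_Icc.2 zero_le_one⟩ 0
      (R + L.toNNReal) R L.toNNReal K :=
    { lipschitzOnWith := fun t ht => (hlip t ht).lipschitzOnWith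
      continuousOn := fun x _ => hcont x
      norm_le := fun t ht x _ => (hbdd t ht x).trans (Real.le_coe_toNNReal L)
      mul_max_le := by simp }
  obtain ⟨φ, hφ, K', hK'⟩ := hPL.exists_forall_mem_closedBall_eq_hasDerivWithinAt_lipschitzOnWith
  exact ⟨φ, hφ, (hK' 1 (right_mem_Icc.2 zero_le_one)).continuousOn⟩

section

variable {f : ℝ → ℝ → ℝ} {v : ℝ → ℝ}

theorem Nonlinearity.continuous_comp (hf : Nonlinearity f) {u : ℝ → ℝ} (hu : Continuous u) :
    Continuous fun t => f t (u t) :=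
  hf.1.continuous.comp (continuous_id.prodMk hu)

theorem Nonlinearity.locallyLipschitz (hf : Nonlinearity f) :
    LocallyLipschitz (Function.uncurry f) :=
  (hf.1.of_le (by simp)).locallyLipschitz

theorem integral_eq_of_isPeriodicSol (hf : Nonlinearity f) (hv : Continuous v) {u : ℝ → ℝ}
    (hu : IsPeriodicSol f v u) :
    ∫ t in (0 : ℝ)..1, v t = ∫ t in (0 : ℝ)..1, f t (u t) := by
  obtain ⟨hc, hper, heq⟩ := hu
  have hderiv_eq : deriv u = fun t => v t - f t (u t) := funext fun t => eq_sub_of_add_eq (heq t)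
  have hzero : ∫ t in (0 : ℝ)..1, deriv u t = 0 := by
    rw [integral_deriv_eq_sub (fun s _ => hc.differentiable one_ne_zero s)
      ((hc.continuous_deriv le_rfl).intervalIntegrable 0 1), ← zero_add (1 : ℝ), hper, sub_self]
  rw [hderiv_eq, integral_sub (hv.intervalIntegrable 0 1)
    ((hf.continuous_comp hc.continuous).intervalIntegrable 0 1)] at hzero
  exact sub_eq_zero.1 hzero

theorem integral_lt_integral_of_forall_lt (hf : Nonlinearity f)
    (hmono : ∀ t, StrictMono (f t)) {u w : ℝ → ℝ} (hu : Continuous u) (hw : Continuous w)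
    (h : ∀ t ∈ Icc (0 : ℝ) 1, u t < w t) :
    ∫ t in (0 : ℝ)..1, f t (u t) < ∫ t in (0 : ℝ)..1, f t (w t) :=
  integral_lt_integral_of_continuousOn_of_le_of_exists_lt one_pos
    (hf.continuous_comp hu).continuousOn (hf.continuous_comp hw).continuousOn
    (fun t ht => (hmono t (h t (Ioc_subset_Icc_self ht))).le)
    ⟨0, left_mem_Icc.2 zero_le_one, hmono 0 (h 0 (left_mem_Icc.2 zero_le_one))⟩

theorem exists_integral_lt_of_isPeriodicSol (hf : Nonlinearity f)
    (hmono : ∀ t, StrictMono (f t)) (hv : Continuous v) {u : ℝ → ℝ}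
    (hu : IsPeriodicSol f v u) :
    (∃ q, ∫ t in (0 : ℝ)..1, f t q < ∫ t in (0 : ℝ)..1, v t) ∧
      ∃ p, ∫ t in (0 : ℝ)..1, v t < ∫ t in (0 : ℝ)..1, f t p := by
  have hu_cont := hu.1.continuous
  obtain ⟨C, hC⟩ := isCompact_Icc.exists_bound_of_continuousOn hu_cont.continuousOn
  rw [integral_eq_of_isPeriodicSol hf hv hu]
  refine ⟨⟨-C - 1, integral_lt_integral_of_forall_lt hf hmono continuous_const hu_cont ?_⟩,
    ⟨C + 1, integral_lt_integral_of_forall_lt hf hmono hu_cont continuous_const ?_⟩⟩ <;>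
  exact fun t ht => by linarith [abs_le.1 (hC t ht)]

theorem IsPeriodicSol.le (hmono : ∀ t, StrictMono (f t)) {u₁ u₂ : ℝ → ℝ}
    (h₁ : IsPeriodicSol f v u₁) (h₂ : IsPeriodicSol f v u₂) (t : ℝ) : u₁ t ≤ u₂ t := by
  obtain ⟨hc₁, hper₁, heq₁⟩ := h₁
  obtain ⟨hc₂, hper₂, heq₂⟩ := h₂
  have hper : Function.Periodic (u₁ - u₂) 1 := fun s => by simp [hper₁ s, hper₂ s]
  obtain ⟨_, ⟨s, rfl⟩, hmax⟩ := (hper.compact_of_continuous one_ne_zero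
    (hc₁.continuous.sub hc₂.continuous)).exists_isGreatest (range_nonempty _)
  have hd₁ := (hc₁.differentiable one_ne_zero s).hasDerivAt
  have hd₂ := (hc₂.differentiable one_ne_zero s).hasDerivAt
  have hderiv : deriv u₁ s = deriv u₂ s := sub_eq_zero.1 <|
    ((isMaxOn_univ_iff.2 fun r => hmax ⟨r, rfl⟩).isLocalMax univ_mem).hasDerivAt_eq_zero (hd₁.sub hd₂)
  by_contra! h
  have hs : u₂ s < u₁ s := by linarith [hmax ⟨t, rfl⟩, Pi.sub_apply u₁ u₂ t, Pi.sub_apply u₁ u₂ s]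
  linarith [heq₁ s, heq₂ s, hmono s hs]

theorem exists_isPeriodicSol_of_hasDerivWithinAt (hf : Nonlinearity f) (hv : Continuous v)
    (hvper : Periodic1 v) {w : ℝ → ℝ}
    (hw : ∀ t ∈ Icc (0 : ℝ) 1, HasDerivWithinAt w (v t - f t (w t)) (Icc 0 1) t)
    (hw1 : w 1 = w 0) : ∃ u, IsPeriodicSol f v u := by
  set u : ℝ → ℝ := fun s => w (Int.fract s)
  have hu_per : Periodic1 u := fun t => by simp [u]
  have hu_eq : ∀ t ∈ Icc (0 : ℝ) 1, u t = w t := fun t ht => by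
    simpa [u] using comp_fract_eq_of_mem_Icc hw1 (n := 0) (by simpa using ht)
  have hrhs_per : Function.Periodic (fun t => v t - f t (u t)) 1 := fun t => by
    simp only [hvper t, hf.2, hu_per t]
  have hderiv : ∀ t, HasDerivAt u (v t - f t (u t)) t :=
    hasDerivAt_comp_fract hrhs_per (fun t ht => by rw [hu_eq t ht]; exact hw t ht) hw1
  have hu_cont : Continuous u := continuous_iff_continuousAt.2 fun t => (hderiv t).continuousAt
  have hderiv_eq : deriv u = fun t => v t - f t (u t) := funext fun t => (hderiv t).deriv
  refine ⟨u, contDiff_one_iff_deriv.2 ⟨fun t => (hderiv t).differentiableAt, ?_⟩, hu_per,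
    fun t => by rw [hderiv_eq]; ring⟩
  rw [hderiv_eq]
  exact hv.sub (hf.continuous_comp hu_cont)

theorem Nonlinearity.exists_flow_projIcc (hf : Nonlinearity f) (hv : Continuous v) {m M : ℝ}
    (hmM : m ≤ M) (R : ℝ≥0) :
    ∃ φ : ℝ → ℝ → ℝ, (∀ a ∈ closedBall (0 : ℝ) R, φ a 0 = a ∧ ∀ t ∈ Icc (0 : ℝ) 1,
      HasDerivWithinAt (φ a) (v t - f t (projIcc m M hmM (φ a t))) (Icc 0 1) t) ∧
      ContinuousOn (φ · 1) (closedBall 0 R) := by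
  obtain ⟨K, hK⟩ := hf.locallyLipschitz.exists_lipschitzWith_projIcc (a := 0) (b := 1) hmM
  obtain ⟨L, hL⟩ := (isCompact_Icc.prod isCompact_Icc).exists_bound_of_continuousOn
    (s := Icc (0 : ℝ) 1 ×ˢ Icc m M) (f := fun z : ℝ × ℝ => v z.1 - f z.1 z.2)
    ((hv.comp continuous_fst).sub hf.1.continuous).continuousOn
  refine exists_flow_of_lipschitzWith (G := fun t x => v t - f t (projIcc m M hmM x)) (K := K)
    (fun t ht => LipschitzWith.of_dist_le_mul fun x y => ?_)
    (fun x => (hv.sub (hf.continuous_comp continuous_const)).continuousOn)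
    (fun t ht x => hL (t, projIcc m M hmM x) ⟨ht, Subtype.prop _⟩) R
  simpa only [dist_sub_left] using (hK t ht).dist_le_mul x y

theorem exists_isPeriodicSol_of_sub_super (hf : Nonlinearity f) (hv : Continuous v)
    (hvper : Periodic1 v) {α β α' β' : ℝ → ℝ} (hα : ∀ t, HasDerivAt α (α' t) t)
    (hβ : ∀ t, HasDerivAt β (β' t) t) (hα1 : α 1 = α 0) (hβ1 : β 1 = β 0) (hαβ : α 0 ≤ β 0)
    (hsub : ∀ t ∈ Icc (0 : ℝ) 1, α' t < v t - f t (α t))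
    (hsuper : ∀ t ∈ Icc (0 : ℝ) 1, v t - f t (β t) < β' t) :
    ∃ u, IsPeriodicSol f v u := by
  obtain ⟨Cα, hCα⟩ := isCompact_Icc.exists_bound_of_continuousOn (s := Icc (0 : ℝ) 1)
    (continuous_iff_continuousAt.2 fun t => (hα t).continuousAt).continuousOn
  obtain ⟨Cβ, hCβ⟩ := isCompact_Icc.exists_bound_of_continuousOn (s := Icc (0 : ℝ) 1)
    (continuous_iff_continuousAt.2 fun t => (hβ t).continuousAt).continuousOn
  set C := max Cα Cβ
  have hbound : ∀ t ∈ Icc (0 : ℝ) 1, α t ∈ Icc (-C) C ∧ β t ∈ Icc (-C) C := fun t ht =>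
    ⟨abs_le.1 ((hCα t ht).trans (le_max_left _ _)), abs_le.1 ((hCβ t ht).trans (le_max_right _ _))⟩
  have hC0 : -C ≤ C := by
    obtain ⟨⟨h₁, h₂⟩, -⟩ := hbound 0 (left_mem_Icc.2 zero_le_one)
    exact h₁.trans h₂
  -- Truncating outside `[-C, C]` makes the field globally Lipschitz; solutions trapped between
  -- `α` and `β` never see the truncation.
  set G : ℝ → ℝ → ℝ := fun t x => v t - f t (projIcc (-C) C hC0 x)
  have hG : ∀ t, ∀ x ∈ Icc (-C) C, G t x = v t - f t x := fun t x hx => by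
    simp only [G, projIcc_of_mem hC0 hx]
  set R : ℝ≥0 := ‖α 0‖₊ + ‖β 0‖₊
  have hball : Icc (α 0) (β 0) ⊆ closedBall 0 R := fun a ha => by
    rw [mem_closedBall_zero_iff, Real.norm_eq_abs, abs_le]
    simp only [R, NNReal.coe_add, coe_nnnorm, Real.norm_eq_abs]
    constructor <;> linarith [ha.1, ha.2, neg_abs_le (α 0), le_abs_self (β 0), abs_nonneg (α 0),
      abs_nonneg (β 0)]
  obtain ⟨φ, hφ, hφ_cont⟩ := hf.exists_flow_projIcc hv hC0 R
  have htrap : ∀ a ∈ Icc (α 0) (β 0), ∀ t ∈ Icc (0 : ℝ) 1, φ a t ∈ Icc (α t) (β t) := by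
    intro a ha t ht
    obtain ⟨h0, hφa⟩ := hφ a (hball ha)
    refine ⟨le_of_hasDerivWithinAt_of_gt (G := G) hφa hα (fun s hs => ?_)
        (by rw [h0]; exact ha.1) t ht,
      le_of_hasDerivWithinAt_of_lt (G := G) hφa hβ (fun s hs => ?_) (by rw [h0]; exact ha.2) t ht⟩
    · rw [hG s _ (hbound s hs).1]; exact hsub s hs
    · rw [hG s _ (hbound s hs).2]; exact hsuper s hs
  obtain ⟨a, ha, hfix⟩ : ∃ a ∈ Icc (α 0) (β 0), φ a 1 - a = 0 := by
    have h1 : (1 : ℝ) ∈ Icc (0 : ℝ) 1 := right_mem_Icc.2 zero_le_one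
    have hψ : ContinuousOn (fun a => φ a 1 - a) (Icc (α 0) (β 0)) :=
      (hφ_cont.mono hball).sub continuousOn_id
    refine intermediate_value_Icc' hαβ hψ ⟨?_, ?_⟩
    · linarith [(htrap (β 0) (right_mem_Icc.2 hαβ) 1 h1).2]
    · linarith [(htrap (α 0) (left_mem_Icc.2 hαβ) 1 h1).1]
  obtain ⟨h0, hφa⟩ := hφ a (hball ha)
  refine exists_isPeriodicSol_of_hasDerivWithinAt hf hv hvper (w := φ a) (fun t ht => ?_)
    (by rw [h0]; linarith)
  have hφ_mem := htrap a ha t ht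
  rw [← hG t _ ⟨(hbound t ht).1.1.trans hφ_mem.1, hφ_mem.2.trans (hbound t ht).2.2⟩]
  exact hφa t ht

theorem exists_isPeriodicSol_of_integral_lt (hf : Nonlinearity f)
    (hmono : ∀ t, StrictMono (f t)) (hv : Continuous v) (hvper : Periodic1 v) {p q : ℝ}
    (hq : ∫ t in (0 : ℝ)..1, f t q < ∫ t in (0 : ℝ)..1, v t)
    (hp : ∫ t in (0 : ℝ)..1, v t < ∫ t in (0 : ℝ)..1, f t p) : ∃ u, IsPeriodicSol f v u := by
  have hcont : ∀ x, Continuous fun t => v t - f t x := fun x =>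
    hv.sub (hf.continuous_comp continuous_const)
  have hmean : ∀ x, ∫ t in (0 : ℝ)..1, (v t - f t x) =
      (∫ t in (0 : ℝ)..1, v t) - ∫ t in (0 : ℝ)..1, f t x := fun x =>
    integral_sub (hv.intervalIntegrable 0 1)
      ((hf.continuous_comp continuous_const).intervalIntegrable 0 1)
  have hint_mono : StrictMono fun x => ∫ t in (0 : ℝ)..1, f t x := fun x y hxy =>
    integral_lt_integral_of_forall_lt hf hmono continuous_const continuous_const fun _ _ => hxy
  have h0 : (0 : ℝ) ∈ Icc (0 : ℝ) 1 := left_mem_Icc.2 zero_le_one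
  obtain ⟨α, hα, hα1, hαq⟩ := exists_periodic_primitive_le (hcont q) q
  obtain ⟨β, hβ, hβ1, hβp⟩ := exists_periodic_primitive_ge (hcont p) p
  refine exists_isPeriodicSol_of_sub_super hf hv hvper hα hβ hα1 hβ1 ?_ (fun t ht => ?_)
    (fun t ht => ?_)
  · linarith [hαq 0 h0, hβp 0 h0, hint_mono.lt_iff_lt.1 (hq.trans hp)]
  · linarith [hmean q, (hmono t).monotone (hαq t ht)]
  · linarith [hmean p, (hmono t).monotone (hβp t ht)]

theorem exists_isPeriodicSol_iff (hf : Nonlinearity f) (hmono : ∀ t, StrictMono (f t))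
    (hv : Continuous v) (hvper : Periodic1 v) :
    (∃ u, IsPeriodicSol f v u) ↔
      (∃ q, ∫ t in (0 : ℝ)..1, f t q < ∫ t in (0 : ℝ)..1, v t) ∧
        ∃ p, ∫ t in (0 : ℝ)..1, v t < ∫ t in (0 : ℝ)..1, f t p :=
  ⟨fun ⟨_, hu⟩ => exists_integral_lt_of_isPeriodicSol hf hmono hv hu,
    fun ⟨⟨_, hq⟩, ⟨_, hp⟩⟩ => exists_isPeriodicSol_of_integral_lt hf hmono hv hvper hq hp⟩

end

/-- By monotone convergence, the extended-real integrals `I₊ = ∫₀¹ sup_x f(t,x) dt` and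
`I₋ = ∫₀¹ inf_x f(t,x) dt` are `⨆ x, ∫₀¹ f(t,x) dt` and `⨅ x, ∫₀¹ f(t,x) dt`. -/
theorem stmt11 (f : ℝ → ℝ → ℝ) (hf : Nonlinearity f)
    (hD2 : ∀ t x, 0 < deriv (f t) x)
    (Iplus Iminus : EReal)
    (hIplus : Iplus = ⨆ x : ℝ, ((∫ t in (0:ℝ)..1, f t x : ℝ) : EReal))
    (hIminus : Iminus = ⨅ x : ℝ, ((∫ t in (0:ℝ)..1, f t x : ℝ) : EReal))
    (v : ℝ → ℝ) (hv : Continuous v) (hvper : Periodic1 v) :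
    ((∃ u : ℝ → ℝ, IsPeriodicSol f v u) ↔
      (Iminus < ((∫ t in (0:ℝ)..1, v t : ℝ) : EReal) ∧
        ((∫ t in (0:ℝ)..1, v t : ℝ) : EReal) < Iplus)) ∧
    (∀ u₁ u₂ : ℝ → ℝ, IsPeriodicSol f v u₁ → IsPeriodicSol f v u₂ →
      u₁ = u₂) := by
  have hmono : ∀ t, StrictMono (f t) := fun t => strictMono_of_deriv_pos (hD2 t)
  subst hIplus hIminus
  refine ⟨?_, fun u₁ u₂ h₁ h₂ => funext fun t => (h₁.le hmono h₂ t).antisymm (h₂.le hmono h₁ t)⟩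
  simp only [iInf_lt_iff, lt_iSup_iff, EReal.coe_lt_coe_iff]
  exact exists_isPeriodicSol_iff hf hmono hv hvper
end

section
/- Let f : ℝ → ℝ be a smooth function with f'''(x) ≥ 0 for all x and with the zero set of f''' consisting of isolated points. Suppose u₁, u₂ : ℝ → ℝ are continuously differentiable 1-periodic functions with u₁(t) < u₂(t) for all t, satisfying ∫₀¹ f'(u₁(t)) dt = ∫₀¹ f'(u₂(t)) dt = 0, and suppose there is a constant C ∈ ℝ with u₁'(t) + f(u₁(t)) = u₂'(t) + f(u₂(t)) + C for all t. Then C > 0. -/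
open Filter Topology

/-!
Write `w = u₂ - u₁ > 0`. Since `f'''` is nonnegative with isolated zeros, `f'` is strictly
convex, so the trapezoid rule overestimates `∫ f'`:
`f(u₂) - f(u₁) < w (f'(u₁) + f'(u₂)) / 2`. The hypothesis turns the left side into `-(w' + C)`,
so `0 < (f'(u₁) + f'(u₂)) / 2 + w' / w + C / w` pointwise. Integrating over a period, the first
term vanishes because `u₁, u₂` are critical, and `∫ w' / w = log w(1) - log w(0) = 0`; hence
`0 < C ∫₀¹ 1 / w`.
-/

open Set MeasureTheory intervalIntegral

theorem strictMono_of_deriv_nonneg_of_isolated_zeros {h : ℝ → ℝ} (hd : Differentiable ℝ h)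
    (hnonneg : ∀ x, 0 ≤ deriv h x)
    (hiso : ∀ x, deriv h x = 0 → ∀ᶠ y in 𝓝[≠] x, deriv h y ≠ 0) : StrictMono h := by
  have hmono : Monotone h := monotone_of_deriv_nonneg hd hnonneg
  refine hmono.strictMono_of_injective fun a b hab => ?_
  by_contra hne
  wlog hlt : a < b generalizing a b
  · exact this b a hab.symm (Ne.symm hne) ((not_lt.1 hlt).lt_of_ne (Ne.symm hne))
  have hconst : EqOn h (fun _ => h a) (Ioo a b) := fun y hy =>
    le_antisymm (hab ▸ hmono hy.2.le) (hmono hy.1.le)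
  have hderiv : ∀ y ∈ Ioo a b, deriv h y = 0 := fun y hy => by
    rw [(hconst.eventuallyEq_of_mem (Ioo_mem_nhds hy.1 hy.2)).deriv_eq, deriv_const]
  obtain ⟨x, hx⟩ := nonempty_Ioo.2 hlt
  obtain ⟨y, hy0, hy⟩ := ((hiso x (hderiv x hx)).and
    (mem_nhdsWithin_of_mem_nhds (Ioo_mem_nhds hx.1 hx.2))).exists
  exact hy0 (hderiv y hy)

theorem strictConvexOn_deriv_of_iteratedDeriv_three_nonneg {f : ℝ → ℝ} (hf : ContDiff ℝ 3 f)
    (hnonneg : ∀ x, 0 ≤ iteratedDeriv 3 f x)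
    (hiso : ∀ x, iteratedDeriv 3 f x = 0 → ∀ᶠ y in 𝓝[≠] x, iteratedDeriv 3 f y ≠ 0) :
    StrictConvexOn ℝ univ (deriv f) := by
  have h3 : iteratedDeriv 3 f = deriv (deriv (deriv f)) := by
    simp [iteratedDeriv_eq_iterate]
  rw [h3] at hnonneg hiso
  have hf' : ContDiff ℝ 2 (deriv f) := (contDiff_succ_iff_deriv.1 hf).2.2
  have hf'' : ContDiff ℝ 1 (deriv (deriv f)) := (contDiff_succ_iff_deriv.1 hf').2.2
  exact (strictMono_of_deriv_nonneg_of_isolated_zeros (hf''.differentiable one_ne_zero)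
    hnonneg hiso).strictConvexOn_univ_of_deriv hf'.continuous

/-- The strict half of the Hermite–Hadamard inequality. -/
theorem StrictConvexOn.integral_lt_trapezoid {g : ℝ → ℝ} {a b : ℝ} (hab : a < b)
    (hg : StrictConvexOn ℝ (Icc a b) g) (hint : IntervalIntegrable g volume a b) :
    ∫ x in a..b, g x < (b - a) * (g a + g b) / 2 := by
  have hsymm : ∀ x ∈ Ioo a b, g x + g (a + b - x) < g a + g b := by
    intro x hx
    have hba : 0 < b - a := sub_pos.2 hab
    set t := (b - x) / (b - a) with ht
    have ht0 : 0 < t := div_pos (sub_pos.2 hx.2) hba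
    have ht1 : 0 < 1 - t := by
      rw [ht, sub_pos, div_lt_one hba]; linarith [hx.1]
    have hx₁ : t • a + (1 - t) • b = x := by
      simp only [smul_eq_mul, ht]; field_simp; ring
    have hx₂ : (1 - t) • a + t • b = a + b - x := by
      simp only [smul_eq_mul, ht]; field_simp; ring
    have h₁ := hg.2 (left_mem_Icc.2 hab.le) (right_mem_Icc.2 hab.le) hab.ne ht0 ht1 (by ring)
    have h₂ := hg.2 (left_mem_Icc.2 hab.le) (right_mem_Icc.2 hab.le) hab.ne ht1 ht0 (by ring)
    rw [hx₁] at h₁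
    rw [hx₂] at h₂
    simp only [smul_eq_mul] at h₁ h₂
    linarith
  have hint' : IntervalIntegrable (fun x => g (a + b - x)) volume a b := by
    simpa using (hint.comp_sub_left (a + b)).symm
  have hreflect : ∫ x in a..b, g (a + b - x) = ∫ x in a..b, g x := by
    simp [intervalIntegral.integral_comp_sub_left]
  have hpos := intervalIntegral_pos_of_pos_on (f := fun x => g a + g b - (g x + g (a + b - x)))
    (intervalIntegrable_const.sub (hint.add hint')) (fun x hx => sub_pos.2 (hsymm x hx)) hab
  rw [intervalIntegral.integral_sub intervalIntegrable_const (hint.add hint'),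
    intervalIntegral.integral_add hint hint', hreflect, intervalIntegral.integral_const,
    smul_eq_mul] at hpos
  linarith

theorem sub_lt_trapezoid_of_strictConvexOn_deriv {f : ℝ → ℝ} {a b : ℝ} (hab : a < b)
    (hf : ∀ x ∈ uIcc a b, DifferentiableAt ℝ f x) (hint : IntervalIntegrable (deriv f) volume a b)
    (hconv : StrictConvexOn ℝ (Icc a b) (deriv f)) :
    f b - f a < (b - a) * (deriv f a + deriv f b) / 2 := by
  rw [← integral_deriv_eq_sub hf hint]
  exact hconv.integral_lt_trapezoid hab hint

theorem integral_deriv_div_eq_log_sub_log {w : ℝ → ℝ} {a b : ℝ}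
    (hw : ∀ t ∈ uIcc a b, DifferentiableAt ℝ w t) (hne : ∀ t ∈ uIcc a b, w t ≠ 0)
    (hint : IntervalIntegrable (fun t => deriv w t / w t) volume a b) :
    ∫ t in a..b, deriv w t / w t = Real.log (w b) - Real.log (w a) := by
  refine integral_eq_sub_of_hasDerivAt (f := fun t => Real.log (w t)) (fun t ht => ?_) hint
  exact (hw t ht).hasDerivAt.log (hne t ht)

theorem pos_of_forall_pos_add_div {p w : ℝ → ℝ} {a b C : ℝ} (hab : a < b)
    (hp : Continuous p) (hp_int : ∫ t in a..b, p t = 0)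
    (hw : ContDiff ℝ 1 w) (hw_pos : ∀ t, 0 < w t) (hw_per : w a = w b)
    (h : ∀ t, 0 < p t + (deriv w t + C) / w t) : 0 < C := by
  have hw_cont : Continuous w := hw.continuous
  have hw'_cont : Continuous (deriv w) := hw.continuous_deriv le_rfl
  have hne : ∀ t, w t ≠ 0 := fun t => (hw_pos t).ne'
  have hlog_int : IntervalIntegrable (fun t => deriv w t / w t) volume a b :=
    (hw'_cont.div hw_cont hne).intervalIntegrable _ _
  have hinv_int : IntervalIntegrable (fun t => C * (w t)⁻¹) volume a b :=
    (continuous_const.mul (hw_cont.inv₀ hne)).intervalIntegrable _ _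
  have hlog : ∫ t in a..b, deriv w t / w t = 0 := by
    rw [integral_deriv_div_eq_log_sub_log (fun t _ => (hw.differentiable one_ne_zero) t)
      (fun t _ => hne t) hlog_int, hw_per, sub_self]
  have hsplit : ∫ t in a..b, (p t + (deriv w t + C) / w t) = C * ∫ t in a..b, (w t)⁻¹ := by
    have hexpand : ∀ t, p t + (deriv w t + C) / w t = p t + (deriv w t / w t + C * (w t)⁻¹) :=
      fun t => by ring
    simp_rw [hexpand]
    rw [integral_add (hp.intervalIntegrable _ _) (hlog_int.add hinv_int),
      integral_add hlog_int hinv_int, hp_int, hlog, intervalIntegral.integral_const_mul, zero_add, zero_add]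
  have hpos : 0 < C * ∫ t in a..b, (w t)⁻¹ := by
    rw [← hsplit]
    exact intervalIntegral_pos_of_pos
      ((hp.add ((hw'_cont.add continuous_const).div hw_cont hne)).intervalIntegrable _ _) h hab
  exact pos_of_mul_pos_left hpos
    (integral_nonneg hab.le fun t _ => inv_nonneg.2 (hw_pos t).le)

/-- **Key comparison claim in the proof of Theorem 5.1**. Let `f` be smooth
with `f''' ≥ 0` and the zeros of `f'''` isolated. If `u₁ < u₂` are `C¹`
1-periodic functions with `∫₀¹ f'(u₁) = ∫₀¹ f'(u₂) = 0` (two critical points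
of `F` on a common fibre) and `u₁' + f(u₁) = u₂' + f(u₂) + C` for a constant
`C`, then `C > 0`. -/
theorem stmt18 (f : ℝ → ℝ) (hf : ContDiff ℝ (⊤ : ℕ∞) f)
    (h3nonneg : ∀ x, 0 ≤ iteratedDeriv 3 f x)
    (h3iso : ∀ x, iteratedDeriv 3 f x = 0 →
      ∀ᶠ y in 𝓝[≠] x, iteratedDeriv 3 f y ≠ 0)
    (u₁ u₂ : ℝ → ℝ)
    (hu₁ : ContDiff ℝ 1 u₁) (hu₁per : Periodic1 u₁)
    (hu₂ : ContDiff ℝ 1 u₂) (hu₂per : Periodic1 u₂)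
    (hlt : ∀ t, u₁ t < u₂ t)
    (hcrit₁ : (∫ t in (0:ℝ)..1, deriv f (u₁ t)) = 0)
    (hcrit₂ : (∫ t in (0:ℝ)..1, deriv f (u₂ t)) = 0)
    (C : ℝ)
    (hC : ∀ t, deriv u₁ t + f (u₁ t) = deriv u₂ t + f (u₂ t) + C) :
    0 < C := by
  have hf3 : ContDiff ℝ 3 f := hf.of_le (WithTop.coe_le_coe.2 le_top)
  have hconv := strictConvexOn_deriv_of_iteratedDeriv_three_nonneg hf3 h3nonneg h3iso
  have hf' : Continuous (deriv f) := hf3.continuous_deriv (by norm_num)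
  have hu₁d := hu₁.differentiable one_ne_zero
  have hu₂d := hu₂.differentiable one_ne_zero
  have hcrit : ∫ t in (0:ℝ)..1, (deriv f (u₁ t) + deriv f (u₂ t)) / 2 = 0 := by
    have hc₁ : Continuous fun t => deriv f (u₁ t) := hf'.comp hu₁d.continuous
    have hc₂ : Continuous fun t => deriv f (u₂ t) := hf'.comp hu₂d.continuous
    rw [intervalIntegral.integral_div, integral_add (hc₁.intervalIntegrable _ _)
      (hc₂.intervalIntegrable _ _), hcrit₁, hcrit₂]
    norm_num
  refine pos_of_forall_pos_add_div zero_lt_one (by fun_prop) hcrit (hu₂.sub hu₁)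
    (fun t => sub_pos.2 (hlt t)) (by simp [← hu₁per 0, ← hu₂per 0]) fun t => ?_
  have htrap := sub_lt_trapezoid_of_strictConvexOn_deriv (hlt t)
    (fun x _ => hf3.differentiable (by norm_num) x) (hf'.intervalIntegrable _ _)
    (hconv.subset (subset_univ _) (convex_Icc _ _))
  have hgap : deriv (fun s => u₂ s - u₁ s) t + C = -(f (u₂ t) - f (u₁ t)) := by
    rw [deriv_fun_sub (hu₂d t) (hu₁d t)]
    linarith [hC t]
  rw [hgap, neg_div]
  have hslope : (f (u₂ t) - f (u₁ t)) / (u₂ t - u₁ t) < (deriv f (u₁ t) + deriv f (u₂ t)) / 2 := by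
    rw [div_lt_iff₀ (sub_pos.2 (hlt t))]
    linarith
  linarith
end
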